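/- arXiv:1607.05031 — 8 statements merged into one kernel-verified Lean document; each statement's English description precedes it below -/
import Mathlib

section
/- Work in A = ℂ[y₁,…,yₙ,x₁,…,x_p] with polynomials f₂,…,f_s ∈ A containing y_i² − y_i for every i, and suppose the system f₂ = 0,…,f_s = 0 is subset closed. Then for every d ∈ {0,1}ⁿ with d ∉ B, the squarefree monomial y_d = ∏_{i : d_i = 1} y_i lies in the ideal ⟨f₂,…,f_s⟩ of A. -/
open MvPolynomial

/-- The `y`-coordinate indicator condition: the vector `χ_d ∈ {0,1}ⁿ` (with
support `d`) arises as the `y`-coordinates of a common zero of the `f j`. -/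
def InB (n p s : ℕ) (f : Fin s → MvPolynomial (Fin n ⊕ Fin p) ℂ)
    (d : Finset (Fin n)) : Prop :=
  ∃ z : (Fin n ⊕ Fin p) → ℂ, (∀ j : Fin s, eval z (f j) = 0) ∧
    ∀ i : Fin n, z (Sum.inl i) = if i ∈ d then 1 else 0

/-- The system `f₂ = 0,…,f_s = 0` is subset closed: the all-zero `y`-vector is
attained, and if `χ_I` is attained as the `y`-coordinates of a common zero
then so is `χ_J` for every `J ⊆ I`. -/
def SubsetClosed (n p s : ℕ) (f : Fin s → MvPolynomial (Fin n ⊕ Fin p) ℂ) : Prop :=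
  (∃ z : (Fin n ⊕ Fin p) → ℂ, (∀ j : Fin s, eval z (f j) = 0) ∧
      ∀ i : Fin n, z (Sum.inl i) = 0) ∧
  ∀ I : Finset (Fin n), InB n p s f I → ∀ J ⊆ I, InB n p s f J

/-!
By the Nullstellensatz, `y_d` lies in the radical of the ideal once it vanishes on `V`. At a
point of `V` the `y`-coordinates form some `χ_J ∈ B`; subset closedness and `d ∉ B` give `d ⊄ J`, so
some factor of `y_d` vanishes there. Finally `y_d` is idempotent modulo the ideal, since each
`y_i² - y_i` lies in it, and an idempotent nilpotent is zero.
-/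

theorem IsIdempotentElem.finset_prod {ι M : Type*} [CommMonoid M] {s : Finset ι} {a : ι → M}
    (h : ∀ i ∈ s, IsIdempotentElem (a i)) : IsIdempotentElem (∏ i ∈ s, a i) := by
  classical
  induction s using Finset.induction_on with
  | empty => simpa using IsIdempotentElem.one
  | insert i s hi ih =>
    rw [Finset.prod_insert hi]
    exact (h i (Finset.mem_insert_self i s)).mul
      (ih fun j hj => h j (Finset.mem_insert_of_mem hj))

theorem Ideal.isIdempotentElem_mk_iff {R : Type*} [CommRing R] {I : Ideal R} {a : R} :
    IsIdempotentElem (Ideal.Quotient.mk I a) ↔ a ^ 2 - a ∈ I := by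
  rw [IsIdempotentElem, ← map_mul, Ideal.Quotient.eq, sq]

theorem Ideal.mem_of_mem_radical_of_isIdempotentElem_mk {R : Type*} [CommRing R] {I : Ideal R}
    {a : R} (hidem : IsIdempotentElem (Ideal.Quotient.mk I a)) (ha : a ∈ I.radical) : a ∈ I := by
  obtain ⟨k, hk⟩ := ha
  rw [← Ideal.Quotient.eq_zero_iff_mem]
  exact hidem.eq_zero_of_isNilpotent ⟨k, by rwa [← map_pow, Ideal.Quotient.eq_zero_iff_mem]⟩

section IndicatorSystem

variable {n p s : ℕ} {f : Fin s → MvPolynomial (Fin n ⊕ Fin p) ℂ}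

theorem eval_inl_eq_zero_or_one
    (hind : ∀ i : Fin n, ∃ j : Fin s, f j = (X (Sum.inl i)) ^ 2 - X (Sum.inl i))
    {z : (Fin n ⊕ Fin p) → ℂ} (hz : ∀ j, eval z (f j) = 0) (i : Fin n) :
    z (Sum.inl i) = 0 ∨ z (Sum.inl i) = 1 := by
  obtain ⟨j, hj⟩ := hind i
  have hzj := hz j
  rw [hj, map_sub, map_pow, eval_X, sub_eq_zero, sq] at hzj
  exact IsIdempotentElem.iff_eq_zero_or_one.1 hzj

theorem inB_of_forall_eval_eq_zero
    (hind : ∀ i : Fin n, ∃ j : Fin s, f j = (X (Sum.inl i)) ^ 2 - X (Sum.inl i))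
    {z : (Fin n ⊕ Fin p) → ℂ} (hz : ∀ j, eval z (f j) = 0) :
    InB n p s f {i | z (Sum.inl i) = 1} := by
  refine ⟨z, hz, fun i => ?_⟩
  rcases eval_inl_eq_zero_or_one hind hz i with h0 | h1 <;> simp [*]

theorem prod_X_mem_radical_span
    (hind : ∀ i : Fin n, ∃ j : Fin s, f j = (X (Sum.inl i)) ^ 2 - X (Sum.inl i))
    (hdown : ∀ I : Finset (Fin n), InB n p s f I → ∀ J ⊆ I, InB n p s f J)
    {d : Finset (Fin n)} (hd : ¬ InB n p s f d) :
    ∏ i ∈ d, X (Sum.inl i) ∈ (Ideal.span (Set.range f)).radical := by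
  rw [← vanishingIdeal_zeroLocus_eq_radical (K := ℂ), mem_vanishingIdeal_iff]
  intro z hz
  rw [zeroLocus_span, Set.mem_ofPred_eq, Set.forall_mem_range] at hz
  obtain ⟨i, hid, hiz⟩ := Finset.not_subset.1 fun hsub =>
    hd (hdown _ (inB_of_forall_eval_eq_zero hind hz) d hsub)
  have hzi : z (Sum.inl i) = 0 :=
    (eval_inl_eq_zero_or_one hind hz i).resolve_right (by simpa using hiz)
  simpa [map_prod] using Finset.prod_eq_zero hid hzi

end IndicatorSystem

/-- If `f₂,…,f_s` contain all the `y_i² − y_i` and the system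
is subset closed, then for every `d ∈ {0,1}ⁿ` not in `B`, the squarefree
monomial `y_d = ∏_{i : d_i = 1} y_i` lies in the ideal `⟨f₂,…,f_s⟩`. -/
theorem stmt4 (n p s : ℕ) (f : Fin s → MvPolynomial (Fin n ⊕ Fin p) ℂ)
    (hind : ∀ i : Fin n, ∃ j : Fin s,
      f j = (X (Sum.inl i)) ^ 2 - X (Sum.inl i))
    (hclosed : SubsetClosed n p s f) :
    ∀ d : Finset (Fin n), ¬ InB n p s f d →
      (∏ i ∈ d, X (Sum.inl i) : MvPolynomial (Fin n ⊕ Fin p) ℂ) ∈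
        Ideal.span (Set.range f) := by
  intro d hd
  refine Ideal.mem_of_mem_radical_of_isIdempotentElem_mk ?_
    (prod_X_mem_radical_span hind hclosed.2 hd)
  rw [map_prod]
  refine IsIdempotentElem.finset_prod fun i _ => Ideal.isIdempotentElem_mk_iff.2 ?_
  obtain ⟨j, hj⟩ := hind i
  exact hj ▸ Ideal.subset_span ⟨j, rfl⟩
end

section
/- Work in A = ℂ[y₁,…,yₙ,x₁,…,x_p] with polynomials f₂,…,f_s ∈ A containing y_i² − y_i for every i. Let b₁,…,b_k ∈ B be distinct and let a₁,…,a_k be nonnegative real numbers. If ∑_{i=1}^k a_i·y_{b_i} lies in the ideal ⟨f₂,…,f_s⟩, then a₁ = ⋯ = a_k = 0. The same conclusion holds when all a_i are nonpositive real numbers. -/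
/-! The polynomial `∑ aₘ y_{bₘ}` vanishes at every point of `V`. At a point whose `y`-coordinates
are the indicator of `e`, the monomial `y_d` evaluates to `1` if `d ⊆ e` and to `0` otherwise, so
the sum of the `aₘ` with `bₘ ⊆ e` is zero. Taking `e = bᵢ`, this sum contains `aᵢ`, and all its
terms have the same sign. -/

open MvPolynomial

theorem MvPolynomial.eval_eq_zero_of_mem_span_range {σ ι R : Type*} [CommRing R]
    {f : ι → MvPolynomial σ R} {z : σ → R} (hz : ∀ j, eval z (f j) = 0)
    {q : MvPolynomial σ R} (hq : q ∈ Ideal.span (Set.range f)) : eval z q = 0 :=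
  (Ideal.span_le (I := RingHom.ker (eval z))).mpr (Set.range_subset_iff.mpr hz) hq

theorem MvPolynomial.eval_prod_X_of_indicator {σ ι R : Type*} [CommSemiring R]
    [DecidableEq ι] {g : ι → σ} {z : σ → R} {e : Finset ι}
    (hz : ∀ i, z (g i) = if i ∈ e then 1 else 0) (d : Finset ι) :
    eval z (∏ j ∈ d, X (g j)) = if d ⊆ e then 1 else 0 := by
  simp only [eval_prod, eval_X, hz, Finset.prod_boole, Finset.subset_iff]

theorem sum_filter_subset_eq_zero_of_mem_span {n p s k : ℕ}
    {f : Fin s → MvPolynomial (Fin n ⊕ Fin p) ℂ} (b : Fin k → Finset (Fin n)) (a : Fin k → ℝ)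
    (hmem : (∑ m : Fin k, C (a m : ℂ) * ∏ j ∈ b m, X (Sum.inl j) :
        MvPolynomial (Fin n ⊕ Fin p) ℂ) ∈ Ideal.span (Set.range f))
    {e : Finset (Fin n)} (he : InB n p s f e) :
    ∑ m ∈ Finset.univ.filter (b · ⊆ e), a m = 0 := by
  obtain ⟨z, hzV, hzy⟩ := he
  have heval := eval_eq_zero_of_mem_span_range hzV hmem
  simp only [map_sum, eval_mul, eval_C, eval_prod_X_of_indicator (g := Sum.inl) hzy, mul_ite,
    mul_one, mul_zero, ← Finset.sum_filter] at heval
  exact_mod_cast heval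

theorem stmt5_general (n p s k : ℕ) (f : Fin s → MvPolynomial (Fin n ⊕ Fin p) ℂ)
    (b : Fin k → Finset (Fin n))
    (hbB : ∀ i : Fin k, InB n p s f (b i))
    (a : Fin k → ℝ) (ha : (∀ i, 0 ≤ a i) ∨ (∀ i, a i ≤ 0))
    (hmem : (∑ i : Fin k, C (a i : ℂ) *
        ∏ j ∈ b i, X (Sum.inl j) : MvPolynomial (Fin n ⊕ Fin p) ℂ) ∈
      Ideal.span (Set.range f)) :
    ∀ i : Fin k, a i = 0 := by
  intro i
  have hsum := sum_filter_subset_eq_zero_of_mem_span b a hmem (hbB i)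
  have hi : i ∈ Finset.univ.filter (b · ⊆ b i) := by simp
  rcases ha with ha | ha
  · exact (Finset.sum_eq_zero_iff_of_nonneg fun m _ => ha m).mp hsum i hi
  · exact (Finset.sum_eq_zero_iff_of_nonpos fun m _ => ha m).mp hsum i hi

/-- If `f₂,…,f_s` contain all the `y_i² − y_i`,
`b₁,…,b_k ∈ B` are distinct and `a₁,…,a_k` are all nonnegative (or all
nonpositive) reals with `∑ aᵢ y_{bᵢ} ∈ ⟨f₂,…,f_s⟩`, then all `aᵢ = 0`. -/
theorem stmt5 (n p s k : ℕ) (f : Fin s → MvPolynomial (Fin n ⊕ Fin p) ℂ)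
    (hind : ∀ i : Fin n, ∃ j : Fin s,
      f j = (X (Sum.inl i)) ^ 2 - X (Sum.inl i))
    (b : Fin k → Finset (Fin n)) (hb : Function.Injective b)
    (hbB : ∀ i : Fin k, InB n p s f (b i))
    (a : Fin k → ℝ) (ha : (∀ i, 0 ≤ a i) ∨ (∀ i, a i ≤ 0))
    (hmem : (∑ i : Fin k, C (a i : ℂ) *
        ∏ j ∈ b i, X (Sum.inl j) : MvPolynomial (Fin n ⊕ Fin p) ℂ) ∈
      Ideal.span (Set.range f)) :
    ∀ i : Fin k, a i = 0 :=
  stmt5_general n p s k f b hbB a ha hmem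
end

section
/- Let G be a finite simple graph with vertex set {1,…,n} and edge set E, and let k ≥ 1 and m be natural numbers. The following system of polynomials in the variables y_{ij} ({i,j} ∈ E) and x₁,…,xₙ has a common zero over ℂ if and only if G has a k-colorable subgraph with m edges, i.e., there is a set E' ⊆ E with |E'| = m such that the graph (V(G), E') admits a proper k-coloring: (∑_{{i,j}∈E} y_{ij}) − m = 0; y_{ij}² − y_{ij} = 0 for every {i,j} ∈ E; x_i^k − 1 = 0 for every i ∈ {1,…,n}; and y_{ij}·(x_i^{k−1} + x_i^{k−2}x_j + ⋯ + x_i x_j^{k−2} + x_j^{k−1}) = 0 for every {i,j} ∈ E. -/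
/-!
A common zero forces every `y_{ij}` to be `0` or `1` and every `x_i` to be a `k`-th root of
unity. For two `k`-th roots of unity `a, b`, the sum `∑ a^(k-1-t) b^t` times `a - b` is
`a^k - b^k = 0`, while for `a = b` it equals `k a^(k-1) ≠ 0`; so it vanishes exactly when
`a ≠ b`. Hence the edges with `y_{ij} = 1` form an `m`-edge subgraph properly coloured by the
`x_i`, and the `k`-th roots of unity are `k` colours. Conversely, a colouring by `Fin k`
composed with `c ↦ ζ^c` for a primitive `k`-th root `ζ`, together with the indicator of `E'`,
is a common zero.
-/

open Finset

theorem geom_sum₂_eq_zero_iff_ne {R : Type*} [CommRing R] [IsDomain R] {x y : R} {k : ℕ}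
    (hk : (k : R) ≠ 0) (hx : x ^ k = 1) (hy : y ^ k = 1) :
    ∑ t ∈ range k, x ^ (k - 1 - t) * y ^ t = 0 ↔ x ≠ y := by
  rw [sum_congr rfl fun t _ => mul_comm (x ^ (k - 1 - t)) (y ^ t)]
  constructor
  · rintro h rfl
    rw [geom_sum₂_self] at h
    have hx0 : x ≠ 0 := ne_zero_pow (by rintro rfl; simp at hk) (hx ▸ one_ne_zero)
    exact mul_ne_zero hk (pow_ne_zero _ hx0) h
  · intro hxy
    have h := geom_sum₂_mul y x k
    rw [hx, hy, sub_self] at h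
    exact (mul_eq_zero.1 h).resolve_right (sub_ne_zero.2 hxy.symm)

theorem Finset.sum_eq_card_filter_eq_one {ι R : Type*} [AddCommMonoidWithOne R] [DecidableEq R]
    {s : Finset ι} {y : ι → R} (hy : ∀ i ∈ s, y i = 0 ∨ y i = 1) :
    ∑ i ∈ s, y i = #{i ∈ s | y i = 1} := by
  rw [← sum_boole]
  refine sum_congr rfl fun i hi => ?_
  rcases hy i hi with h | h <;> simp [h]

theorem SimpleGraph.colorable_iff_exists_pow_eq_one {V R : Type*} [CommRing R] [IsDomain R]
    {ζ : R} {k : ℕ} [NeZero k] (hζ : IsPrimitiveRoot ζ k) (G : SimpleGraph V) :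
    G.Colorable k ↔ ∃ f : V → R, (∀ v, f v ^ k = 1) ∧ ∀ ⦃u v⦄, G.Adj u v → f u ≠ f v := by
  constructor
  · rintro ⟨C⟩
    refine ⟨fun v => ζ ^ (C v : ℕ), fun v => by rw [pow_right_comm, hζ.pow_eq_one, one_pow],
      fun u v huv h => C.valid huv (Fin.ext (hζ.pow_inj (C u).isLt (C v).isLt h))⟩
  · rintro ⟨f, hf, hadj⟩
    choose c hck hcf using fun v => hζ.eq_pow_of_pow_eq_one (hf v)
    refine ⟨.mk (fun v => ⟨c v, hck v⟩) fun {u v} huv h => hadj huv ?_⟩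
    rw [← hcf u, ← hcf v, show c u = c v from congrArg Fin.val h]

/-- The system `(∑_{{i,j}∈E} y_{ij}) − m`,
`y_{ij}² − y_{ij}`, `x_i^k − 1`, `y_{ij}·(x_i^{k−1} + x_i^{k−2}x_j + ⋯ + x_j^{k−1})`
has a common zero over `ℂ` iff `G` has a `k`-colorable subgraph with `m`
edges. -/
theorem stmt10 (n : ℕ) (G : SimpleGraph (Fin n)) [DecidableRel G.Adj]
    (k m : ℕ) (hk : 1 ≤ k) :
    (∃ (zy : Sym2 (Fin n) → ℂ) (zx : Fin n → ℂ),
      (∑ e ∈ G.edgeFinset, zy e) - (m : ℂ) = 0 ∧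
      (∀ e ∈ G.edgeFinset, zy e ^ 2 - zy e = 0) ∧
      (∀ i : Fin n, zx i ^ k - 1 = 0) ∧
      (∀ i j : Fin n, G.Adj i j →
        zy s(i, j) * (∑ t ∈ Finset.range k, zx i ^ (k - 1 - t) * zx j ^ t) = 0))
    ↔
    (∃ E' ⊆ G.edgeFinset, E'.card = m ∧
      (SimpleGraph.fromEdgeSet (↑E' : Set (Sym2 (Fin n)))).Colorable k) := by
  classical
  have : NeZero k := ⟨by omega⟩
  have hζ := Complex.isPrimitiveRoot_exp k (NeZero.ne k)
  have hkC : (k : ℂ) ≠ 0 := Nat.cast_ne_zero.2 (NeZero.ne k)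
  constructor
  · rintro ⟨zy, zx, hsum, hy, hx, hedge⟩
    have hy01 : ∀ e ∈ G.edgeFinset, zy e = 0 ∨ zy e = 1 := fun e he =>
      IsIdempotentElem.iff_eq_zero_or_one.1 (by rw [IsIdempotentElem, ← sq, ← sub_eq_zero, hy e he])
    have hx1 : ∀ i, zx i ^ k = 1 := fun i => sub_eq_zero.1 (hx i)
    refine ⟨{e ∈ G.edgeFinset | zy e = 1}, filter_subset _ _, ?_, ?_⟩
    · exact_mod_cast ((sum_eq_card_filter_eq_one hy01).symm.trans (sub_eq_zero.1 hsum))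
    refine (SimpleGraph.colorable_iff_exists_pow_eq_one hζ _).2 ⟨zx, hx1, fun i j hij => ?_⟩
    obtain ⟨hE, hy1⟩ := mem_filter.1 ((SimpleGraph.fromEdgeSet_adj _).1 hij).1
    have := hedge i j (G.mem_edgeSet.1 (G.mem_edgeFinset.1 hE))
    rwa [hy1, one_mul, geom_sum₂_eq_zero_iff_ne hkC (hx1 i) (hx1 j)] at this
  · rintro ⟨E', hsub, rfl, hcol⟩
    obtain ⟨f, hf, hadj⟩ := (SimpleGraph.colorable_iff_exists_pow_eq_one hζ _).1 hcol
    refine ⟨fun e => if e ∈ E' then 1 else 0, f, ?_, fun e _ => ?_, fun i => sub_eq_zero.2 (hf i),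
      fun i j hij => ?_⟩
    · rw [sum_boole, filter_mem_eq_inter, inter_eq_right.2 hsub, sub_self]
    · dsimp only
      split_ifs <;> norm_num
    · dsimp only
      split_ifs with hE
      · rw [one_mul, geom_sum₂_eq_zero_iff_ne hkC (hf i) (hf j)]
        exact hadj ((SimpleGraph.fromEdgeSet_adj _).2 ⟨hE, hij.ne⟩)
      · rw [zero_mul]
end

section
/- Let G be a finite simple graph with vertex set {1,…,n} and edge set E, and let m be a natural number. The following system of polynomials in the variables y_{ij} ({i,j} ∈ E) has a common zero over ℂ if and only if G has a regular spanning subgraph with m edges, i.e., there is a set E' ⊆ E with |E'| = m and a natural number r such that every vertex of G is incident to exactly r edges of E': (∑_{{i,j}∈E} y_{ij}) − m = 0; y_{ij}² − y_{ij} = 0 for all {i,j} ∈ E; and ∑_{j∈N(i)} y_{ij} − ∑_{k∈N(ℓ)} y_{kℓ} = 0 for every pair of vertices i, ℓ ∈ {1,…,n}. -/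
/-!
By `y² = y`, a common zero takes only the values `0` and `1` on the edges, so it is the indicator
of an edge set `E'`. For such an indicator the first equation counts `|E'|`, and the sum over
`N(i)` counts the edges of `E'` at `i` (the neighbours of `i` are in bijection with the edges
incident to `i`); as `ℂ` has characteristic zero, the equations hold exactly when `|E'| = m` and
all these degrees agree.
-/

open Finset

theorem forall_eq_iff_exists_forall_eq {α β : Type*} [Nonempty β] {f : α → β} :
    (∀ a b, f a = f b) ↔ ∃ c, ∀ a, f a = c := by
  refine ⟨fun h => ?_, fun ⟨c, hc⟩ a b => (hc a).trans (hc b).symm⟩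
  rcases isEmpty_or_nonempty α with _ | ⟨⟨a⟩⟩
  · exact ⟨Classical.arbitrary β, isEmptyElim⟩
  · exact ⟨f a, fun b => h b a⟩

namespace SimpleGraph

variable {V : Type*} [Fintype V] [DecidableEq V] (G : SimpleGraph V) [DecidableRel G.Adj]

theorem image_mk_neighborFinset (v : V) :
    (G.neighborFinset v).image (s(v, ·)) = G.incidenceFinset v := by
  ext e
  induction e using Sym2.ind with
  | _ a b =>
    simp only [mem_image, mem_neighborFinset, mem_incidenceFinset, mk'_mem_incidenceSet_iff,
      Sym2.eq_iff]
    grind [G.adj_symm]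

theorem sum_incidenceFinset {M : Type*} [AddCommMonoid M] (f : Sym2 V → M) (v : V) :
    ∑ e ∈ G.incidenceFinset v, f e = ∑ w ∈ G.neighborFinset v, f s(v, w) := by
  rw [← image_mk_neighborFinset, sum_image fun _ _ _ _ h => Sym2.congr_right.mp h]

theorem sum_neighborFinset_ite_mem {R : Type*} [AddCommMonoidWithOne R]
    {E' : Finset (Sym2 V)} (hE' : E' ⊆ G.edgeFinset) (v : V) :
    ∑ w ∈ G.neighborFinset v, (if s(v, w) ∈ E' then 1 else 0 : R) =
      #{e ∈ E' | v ∈ e} := by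
  rw [← sum_incidenceFinset G (fun e => if e ∈ E' then (1 : R) else 0), sum_boole,
    incidenceFinset_eq_filter, filter_filter]
  congr 2
  ext e
  simp only [mem_filter]
  exact ⟨fun ⟨_, hv, he⟩ => ⟨he, hv⟩, fun ⟨he, hv⟩ => ⟨hE' he, hv, he⟩⟩

theorem sum_edgeFinset_ite_mem {R : Type*} [AddCommMonoidWithOne R]
    {E' : Finset (Sym2 V)} (hE' : E' ⊆ G.edgeFinset) :
    ∑ e ∈ G.edgeFinset, (if e ∈ E' then 1 else 0 : R) = #E' := by
  rw [sum_boole, filter_mem_eq_inter, inter_eq_right.mpr hE']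

theorem linear_system_iff_card_eq_and_regular {R : Type*} [Ring R] [CharZero R]
    {E' : Finset (Sym2 V)} (hE' : E' ⊆ G.edgeFinset) {y : Sym2 V → R}
    (hy : ∀ e ∈ G.edgeFinset, y e = if e ∈ E' then 1 else 0) (m : ℕ) :
    ((∑ e ∈ G.edgeFinset, y e) - m = 0 ∧
      ∀ i l,
        (∑ j ∈ G.neighborFinset i, y s(i, j)) - ∑ k ∈ G.neighborFinset l, y s(k, l) = 0)
    ↔
    (#E' = m ∧ ∃ r : ℕ, ∀ v, #{e ∈ E' | v ∈ e} = r) := by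
  have hsum : ∑ e ∈ G.edgeFinset, y e = #E' := by
    rw [sum_congr rfl hy, sum_edgeFinset_ite_mem G hE']
  have hdeg (v : V) : ∑ w ∈ G.neighborFinset v, y s(v, w) = #{e ∈ E' | v ∈ e} := by
    rw [← sum_neighborFinset_ite_mem G hE']
    exact sum_congr rfl fun w hw => hy _ (by simpa using hw)
  have hswap (v : V) :
      ∑ w ∈ G.neighborFinset v, y s(w, v) = ∑ w ∈ G.neighborFinset v, y s(v, w) :=
    sum_congr rfl fun _ _ => by rw [Sym2.eq_swap]
  simp_rw [sub_eq_zero, hswap, hsum, hdeg, Nat.cast_inj]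
  rw [forall_eq_iff_exists_forall_eq]

end SimpleGraph

/-- The system `(∑_{{i,j}∈E} y_{ij}) − m`,
`y_{ij}² − y_{ij}`, `∑_{j∈N(i)} y_{ij} − ∑_{k∈N(ℓ)} y_{kℓ}` (all pairs
`i, ℓ`) has a common zero over `ℂ` iff `G` has a regular spanning subgraph
with `m` edges: a set `E' ⊆ E` of `m` edges in which every vertex of `G` is
incident to the same number `r` of edges of `E'`. -/
theorem stmt12 (n : ℕ) (G : SimpleGraph (Fin n)) [DecidableRel G.Adj] (m : ℕ) :
    (∃ zy : Sym2 (Fin n) → ℂ,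
      (∑ e ∈ G.edgeFinset, zy e) - (m : ℂ) = 0 ∧
      (∀ e ∈ G.edgeFinset, zy e ^ 2 - zy e = 0) ∧
      (∀ i l : Fin n,
        (∑ j ∈ G.neighborFinset i, zy s(i, j)) -
          (∑ k ∈ G.neighborFinset l, zy s(k, l)) = 0))
    ↔
    (∃ E' ⊆ G.edgeFinset, E'.card = m ∧
      ∃ r : ℕ, ∀ v : Fin n, (E'.filter fun e => v ∈ e).card = r) := by
  constructor
  · rintro ⟨y, hsum, hidem, hdeg⟩
    set E' := {e ∈ G.edgeFinset | y e = 1}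
    have hy (e : Sym2 (Fin n)) (he : e ∈ G.edgeFinset) : y e = if e ∈ E' then 1 else 0 := by
      have : IsIdempotentElem (y e) := by
        rw [IsIdempotentElem, ← sq]
        exact sub_eq_zero.mp (hidem e he)
      rcases IsIdempotentElem.iff_eq_zero_or_one.mp this with h | h <;> simp [E', he, h]
    exact ⟨E', filter_subset _ _,
      (G.linear_system_iff_card_eq_and_regular (filter_subset _ _) hy m).mp ⟨hsum, hdeg⟩⟩
  · rintro ⟨E', hE', hregular⟩
    obtain ⟨hsum, hdeg⟩ :=
      (G.linear_system_iff_card_eq_and_regular (R := ℂ) hE' (fun _ _ => rfl) m).mpr hregular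
    exact ⟨_, hsum, fun e _ => by split_ifs <;> norm_num, hdeg⟩
end

section
/- Let G be a finite simple graph with vertex set {1,…,n} and edge set E, and let k ≥ 1 and m be natural numbers. The following system of polynomials in the variables y_{ij} ({i,j} ∈ E) has a common zero over ℂ if and only if G has a k-regular subgraph with m edges, i.e., there is a set E' ⊆ E with |E'| = m such that every vertex of G is incident to either exactly k edges of E' or to no edge of E': (∑_{{i,j}∈E} y_{ij}) − m = 0; y_{ij}² − y_{ij} = 0 for all {i,j} ∈ E; and (∑_{j∈N(i)} y_{ij})·((∑_{j∈N(i)} y_{ij}) − k) = 0 for every i ∈ {1,…,n}. -/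
/-!
The equations `y² - y = 0` force every `y_e` to be `0` or `1`, so a common zero is the indicator
function of an edge set `E'`. For such a point the first equation says `|E'| = m`, and the
neighbourhood sum at `i` counts the edges of `E'` at `i`, so the equation at `i` says that this
count is `0` or `k`.
-/

open Finset

namespace SimpleGraph

variable {V : Type*} [Fintype V] [DecidableEq V] (G : SimpleGraph V) [DecidableRel G.Adj]

theorem incidenceFinset_eq_image_neighborFinset (v : V) :
    G.incidenceFinset v = (G.neighborFinset v).image (s(v, ·)) := by
  ext e
  induction e with
  | h x y =>
    simp only [mem_incidenceFinset, mk'_mem_incidenceSet_iff, mem_image, mem_neighborFinset,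
      Sym2.eq_iff]
    constructor
    · rintro ⟨hxy, rfl | rfl⟩
      · exact ⟨y, hxy, Or.inl ⟨rfl, rfl⟩⟩
      · exact ⟨x, hxy.symm, Or.inr ⟨rfl, rfl⟩⟩
    · rintro ⟨w, hvw, ⟨rfl, rfl⟩ | ⟨rfl, rfl⟩⟩
      · exact ⟨hvw, Or.inl rfl⟩
      · exact ⟨hvw.symm, Or.inr rfl⟩

theorem sum_neighborFinset_eq_sum_incidenceFinset {M : Type*} [AddCommMonoid M] (v : V)
    (f : Sym2 V → M) :
    ∑ w ∈ G.neighborFinset v, f s(v, w) = ∑ e ∈ G.incidenceFinset v, f e := by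
  rw [incidenceFinset_eq_image_neighborFinset, sum_image]
  exact fun _ _ _ _ h => Sym2.congr_right.mp h

section Indicator

variable {R : Type*} [AddCommMonoidWithOne R] {G} {E' : Finset (Sym2 V)} {y : Sym2 V → R}

theorem sum_edgeFinset_eq_card (hE' : E' ⊆ G.edgeFinset)
    (hy : ∀ e ∈ G.edgeFinset, y e = if e ∈ E' then 1 else 0) :
    ∑ e ∈ G.edgeFinset, y e = #E' := by
  rw [sum_congr rfl hy, sum_boole, filter_mem_eq_inter, inter_eq_right.mpr hE']

theorem sum_neighborFinset_eq_card (hE' : E' ⊆ G.edgeFinset)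
    (hy : ∀ e ∈ G.edgeFinset, y e = if e ∈ E' then 1 else 0) (v : V) :
    ∑ w ∈ G.neighborFinset v, y s(v, w) = #{e ∈ E' | v ∈ e} := by
  rw [sum_neighborFinset_eq_sum_incidenceFinset,
    sum_congr rfl fun e he => hy e (G.incidenceFinset_subset v he), sum_boole,
    incidenceFinset_eq_filter]
  congr 2
  ext e
  simp only [mem_filter]
  exact ⟨fun ⟨⟨_, hv⟩, he⟩ => ⟨he, hv⟩, fun ⟨he, hv⟩ => ⟨⟨hE' he, hv⟩, he⟩⟩

end Indicator

end SimpleGraph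

theorem natCast_mul_sub_natCast_eq_zero_iff {R : Type*} [Ring R] [NoZeroDivisors R] [CharZero R]
    {a k : ℕ} : (a : R) * (a - k) = 0 ↔ a = k ∨ a = 0 := by
  rw [mul_eq_zero, sub_eq_zero, Nat.cast_eq_zero, Nat.cast_inj, or_comm]

theorem stmt13_general (n : ℕ) (G : SimpleGraph (Fin n)) [DecidableRel G.Adj]
    (k m : ℕ) :
    (∃ zy : Sym2 (Fin n) → ℂ,
      (∑ e ∈ G.edgeFinset, zy e) - (m : ℂ) = 0 ∧
      (∀ e ∈ G.edgeFinset, zy e ^ 2 - zy e = 0) ∧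
      (∀ i : Fin n,
        (∑ j ∈ G.neighborFinset i, zy s(i, j)) *
          ((∑ j ∈ G.neighborFinset i, zy s(i, j)) - (k : ℂ)) = 0))
    ↔
    (∃ E' ⊆ G.edgeFinset, E'.card = m ∧
      ∀ v : Fin n,
        (E'.filter fun e => v ∈ e).card = k ∨
        (E'.filter fun e => v ∈ e).card = 0) := by
  classical
  constructor
  · rintro ⟨y, hm, hidem, hdeg⟩
    set E' := G.edgeFinset.filter (y · = 1)
    have hE' : E' ⊆ G.edgeFinset := filter_subset _ _
    have hy : ∀ e ∈ G.edgeFinset, y e = if e ∈ E' then 1 else 0 := by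
      intro e he
      have : IsIdempotentElem (y e) := by
        rw [IsIdempotentElem, ← sq]; exact sub_eq_zero.mp (hidem e he)
      rcases IsIdempotentElem.iff_eq_zero_or_one.mp this with h | h <;> simp [E', he, h]
    refine ⟨E', hE', ?_, fun v => ?_⟩
    · rw [SimpleGraph.sum_edgeFinset_eq_card hE' hy, sub_eq_zero] at hm
      exact_mod_cast hm
    · rw [← natCast_mul_sub_natCast_eq_zero_iff (R := ℂ),
        ← SimpleGraph.sum_neighborFinset_eq_card hE' hy]
      exact hdeg v
  · rintro ⟨E', hE', rfl, hreg⟩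
    set y : Sym2 (Fin n) → ℂ := fun e => if e ∈ E' then 1 else 0
    have hy : ∀ e ∈ G.edgeFinset, y e = if e ∈ E' then 1 else 0 := fun _ _ => rfl
    refine ⟨y, ?_, fun e _ => ?_, fun v => ?_⟩
    · rw [SimpleGraph.sum_edgeFinset_eq_card hE' hy, sub_self]
    · by_cases he : e ∈ E' <;> simp [y, he]
    · rw [SimpleGraph.sum_neighborFinset_eq_card hE' hy, natCast_mul_sub_natCast_eq_zero_iff]
      exact hreg v

/-- The system `(∑_{{i,j}∈E} y_{ij}) − m`,
`y_{ij}² − y_{ij}`, `(∑_{j∈N(i)} y_{ij})·((∑_{j∈N(i)} y_{ij}) − k)` has a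
common zero over `ℂ` iff `G` has a `k`-regular subgraph with `m` edges: a set
`E' ⊆ E` of `m` edges such that every vertex of `G` is incident to exactly
`k` edges of `E'` or to none. -/
theorem stmt13 (n : ℕ) (G : SimpleGraph (Fin n)) [DecidableRel G.Adj]
    (k m : ℕ) (hk : 1 ≤ k) :
    (∃ zy : Sym2 (Fin n) → ℂ,
      (∑ e ∈ G.edgeFinset, zy e) - (m : ℂ) = 0 ∧
      (∀ e ∈ G.edgeFinset, zy e ^ 2 - zy e = 0) ∧
      (∀ i : Fin n,
        (∑ j ∈ G.neighborFinset i, zy s(i, j)) *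
          ((∑ j ∈ G.neighborFinset i, zy s(i, j)) - (k : ℂ)) = 0))
    ↔
    (∃ E' ⊆ G.edgeFinset, E'.card = m ∧
      ∀ v : Fin n,
        (E'.filter fun e => v ∈ e).card = k ∨
        (E'.filter fun e => v ∈ e).card = 0) :=
  stmt13_general n G k m
end

section
/- Let G be a finite simple graph with vertex set {1,…,n} and edge set E, and let m be a natural number. The system consisting of the polynomials (∑_{i=1}^n x_i) − m, x_i² − x_i for all i ∈ {1,…,n}, and (x_i − 1)(x_j − 1) for all {i,j} ∈ E has a common zero over ℂ if and only if G has a vertex cover of size m. Furthermore, if the system has no common zero, then the minimum degree of a Nullstellensatz certificate for this system equals the independence number α(G). -/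
open MvPolynomial Finset

/-- A finset of vertices is independent: no two of its members are adjacent. -/
def IsIndepFinset {V : Type*} (G : SimpleGraph V) (s : Finset V) : Prop :=
  ∀ u ∈ s, ∀ v ∈ s, ¬ G.Adj u v

/-- The independence number of `G`. -/
noncomputable def indepNum (n : ℕ) (G : SimpleGraph (Fin n)) : ℕ :=
  sSup {k : ℕ | ∃ s : Finset (Fin n), IsIndepFinset G s ∧ s.card = k}

/-- The polynomial `(x_i − 1)·(x_j − 1)` attached to the edge `{i, j}`. -/
noncomputable def vcPoly {n : ℕ} (e : Sym2 (Fin n)) : MvPolynomial (Fin n) ℂ :=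
  Sym2.lift ⟨fun i j => (X i - 1) * (X j - 1), fun _ _ => mul_comm _ _⟩ e

section Aux
variable {n : ℕ} {G : SimpleGraph (Fin n)}

lemma indep_subset {s t : Finset (Fin n)} (h : IsIndepFinset G s) (hts : t ⊆ s) :
    IsIndepFinset G t := fun u hu v hv => h u (hts hu) v (hts hv)

lemma indep_bddAbove :
    BddAbove {k : ℕ | ∃ s : Finset (Fin n), IsIndepFinset G s ∧ s.card = k} := by
  refine ⟨n, ?_⟩
  rintro k ⟨s, -, rfl⟩
  simpa using s.card_le_univ

lemma indep_card_le {s : Finset (Fin n)} (h : IsIndepFinset G s) :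
    s.card ≤ indepNum n G :=
  le_csSup indep_bddAbove ⟨s, h, rfl⟩

lemma exists_max_indep :
    ∃ I : Finset (Fin n), IsIndepFinset G I ∧ I.card = indepNum n G := by
  have : indepNum n G ∈ {k : ℕ | ∃ s : Finset (Fin n), IsIndepFinset G s ∧ s.card = k} :=
    Nat.sSup_mem ⟨0, ∅, fun u hu => by simp at hu, by simp⟩ indep_bddAbove
  obtain ⟨s, hs, hc⟩ := this
  exact ⟨s, hs, hc⟩

end Aux

lemma binom_frac : ∀ (N : ℕ) (x : ℂ), (∀ j ∈ range (N + 1), x + j ≠ 0) →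
    ∑ j ∈ range (N + 1), (-1 : ℂ) ^ j * (N.choose j) / (x + j)
      = (N.factorial : ℂ) / ∏ j ∈ range (N + 1), (x + j) := by
  intro N
  induction N with
  | zero => intro x hx; simp
  | succ N ih =>
    intro x hx
    have hx0 : x ≠ 0 := by simpa using hx 0 (by simp)
    have hxj : ∀ j ∈ range (N + 1), x + j ≠ 0 := fun j hj =>
      hx j (mem_range.2 (Nat.lt_succ_of_lt (mem_range.1 hj)))
    have hxj1 : ∀ j ∈ range (N + 1), (x + 1) + j ≠ 0 := by
      intro j hj
      have h := hx (j + 1) (by simpa using Nat.succ_lt_succ (mem_range.1 hj))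
      intro hc; apply h; push_cast; push_cast at hc; linear_combination hc
    set S1 := ∑ j ∈ range (N + 1), (-1 : ℂ) ^ j * (N.choose j) / (x + j) with hS1
    set S2 := ∑ j ∈ range (N + 1), (-1 : ℂ) ^ j * (N.choose j) / ((x + 1) + j) with hS2
    have key : ∑ j ∈ range (N + 1 + 1), (-1 : ℂ) ^ j * ((N+1).choose j) / (x + j)
        = S1 - S2 := by
      rw [Finset.sum_range_succ' (fun j => (-1 : ℂ) ^ j * ((N+1).choose j) / (x + j)) (N+1)]
      have expand : ∀ i ∈ range (N + 1),
          (-1 : ℂ) ^ (i+1) * (((N+1).choose (i+1) : ℕ) : ℂ) / (x + ((i+1 : ℕ) : ℂ))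
            = (-(-1 : ℂ) ^ i * (N.choose i)) / ((x+1) + i)
              + (-1 : ℂ) ^ (i+1) * (N.choose (i+1)) / (x + ((i+1:ℕ) : ℂ)) := by
        intro i hi
        rw [Nat.choose_succ_succ]
        push_cast
        ring
      rw [Finset.sum_congr rfl expand, Finset.sum_add_distrib]
      have e1 : ∑ i ∈ range (N + 1), (-(-1:ℂ)^i * (N.choose i)) / ((x+1)+i) = - S2 := by
        rw [hS2, ← Finset.sum_neg_distrib]
        exact Finset.sum_congr rfl fun i _ => by ring
      have e2 : (∑ i ∈ range (N + 1), (-1:ℂ)^(i+1) * (N.choose (i+1)) / (x+((i+1:ℕ):ℂ)))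
            + (-1:ℂ)^0 * (((N+1).choose 0 : ℕ) : ℂ) / (x + ((0:ℕ) : ℂ)) = S1 := by
        have h3 := Finset.sum_range_succ' (fun j => (-1 : ℂ) ^ j * (N.choose j) / (x + j)) (N+1)
        rw [Finset.sum_range_succ] at h3
        simp only [Nat.choose_succ_self, Nat.cast_zero, mul_zero, zero_div, add_zero,
          Nat.choose_zero_right, Nat.cast_one, pow_zero, one_mul, mul_one] at h3
        simp only [Nat.choose_zero_right, Nat.cast_zero, add_zero, Nat.cast_one, pow_zero,
          one_mul, mul_one]
        exact h3.symm
      rw [e1]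
      linear_combination e2
    rw [key, hS1, hS2, ih x hxj, ih (x+1) hxj1]
    have hP : ∏ j ∈ range (N + 1), (x + j) ≠ 0 := Finset.prod_ne_zero_iff.2 hxj
    have hP1 : ∏ j ∈ range (N + 1), ((x+1) + j) ≠ 0 := Finset.prod_ne_zero_iff.2 hxj1
    have hshift : ∏ j ∈ range (N + 1 + 1), (x + j) = (∏ j ∈ range (N+1), ((x+1)+j)) * x := by
      rw [Finset.prod_range_succ' (fun j => x + (j:ℂ)) (N+1)]
      congr 1
      · exact Finset.prod_congr rfl fun j _ => by push_cast; ring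
      · norm_num
    have hlast : ∏ j ∈ range (N + 1 + 1), (x + j)
        = (∏ j ∈ range (N + 1), (x + j)) * (x + ((N:ℂ)+1)) := by
      rw [Finset.prod_range_succ]
      push_cast; ring
    have hxN : x + ((N:ℂ) + 1) ≠ 0 := by
      have h := hx (N+1) (by simp)
      push_cast at h; exact h
    rw [Nat.factorial_succ]
    rw [div_sub_div _ _ hP hP1]
    rw [hshift]
    rw [div_eq_div_iff (mul_ne_zero hP hP1) (mul_ne_zero hP1 hx0)]
    push_cast
    linear_combination ((N.factorial : ℂ) * ∏ j ∈ range (N+1), (x+1+(j:ℂ))) *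
      (hshift.symm.trans hlast)

lemma alt_sum_superset {α : Type*} [DecidableEq α] (I D : Finset α) (hD : D ⊆ I) (hne : D ≠ I) :
    ∑ U ∈ I.powerset, (-1 : ℂ) ^ U.card * (if D ⊆ U then 1 else 0) = 0 := by
  classical
  simp only [mul_ite, mul_one, mul_zero]
  rw [← Finset.sum_filter]
  have hbij : ∑ U ∈ I.powerset.filter (fun U => D ⊆ U), (-1 : ℂ) ^ U.card
      = ∑ W ∈ (I \ D).powerset, (-1 : ℂ) ^ (W.card + D.card) := by
    refine Finset.sum_nbij' (fun U => U \ D) (fun W => W ∪ D) ?_ ?_ ?_ ?_ ?_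
    · intro U hU
      simp only [Finset.mem_filter, Finset.mem_powerset] at hU
      exact Finset.mem_powerset.2 (Finset.sdiff_subset_sdiff hU.1 Finset.Subset.rfl)
    · intro W hW
      simp only [Finset.mem_powerset] at hW
      refine Finset.mem_filter.2 ⟨Finset.mem_powerset.2 ?_, Finset.subset_union_right⟩
      exact Finset.union_subset (hW.trans Finset.sdiff_subset) hD
    · intro U hU
      simp only [Finset.mem_filter, Finset.mem_powerset] at hU
      exact Finset.sdiff_union_of_subset hU.2
    · intro W hW
      simp only [Finset.mem_powerset] at hW
      refine Finset.union_sdiff_cancel_right ?_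
      exact Finset.disjoint_left.2 fun a ha => (Finset.mem_sdiff.1 (hW ha)).2
    · intro U hU
      simp only [Finset.mem_filter, Finset.mem_powerset] at hU
      congr 1
      rw [Finset.card_sdiff_of_subset hU.2]
      have := Finset.card_le_card hU.2
      omega
  rw [hbij]
  have : ∑ W ∈ (I \ D).powerset, (-1 : ℂ) ^ (W.card + D.card)
      = ((-1 : ℂ) ^ D.card) * ∑ W ∈ (I \ D).powerset, (-1 : ℂ) ^ W.card := by
    rw [Finset.mul_sum]
    exact Finset.sum_congr rfl fun W _ => by rw [pow_add]; ring
  rw [this]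
  have hz : ∑ W ∈ (I \ D).powerset, (-1 : ℂ) ^ W.card = 0 := by
    have h := Finset.sum_powerset_neg_one_pow_card (x := I \ D)
    have hne' : I \ D ≠ ∅ := by
      intro h0
      exact hne (Finset.Subset.antisymm hD (fun a ha => by
        by_contra hna
        exact absurd (Finset.mem_sdiff.2 ⟨ha, hna⟩) (by simp [h0])))
    rw [if_neg hne'] at h
    calc ∑ W ∈ (I \ D).powerset, (-1 : ℂ) ^ W.card
        = ((∑ W ∈ (I \ D).powerset, (-1 : ℤ) ^ W.card : ℤ) : ℂ) := by push_cast; rfl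
      _ = 0 := by rw [h]; simp
  rw [hz, mul_zero]

lemma lowdeg_altsum {n : ℕ} (I : Finset (Fin n)) (f : MvPolynomial (Fin n) ℂ)
    (hdeg : f.totalDegree < I.card) :
    ∑ U ∈ I.powerset, (-1 : ℂ) ^ U.card
      * eval (fun i => if i ∉ I ∨ i ∈ U then (1 : ℂ) else 0) f = 0 := by
  classical
  have hmono : ∀ (d : Fin n →₀ ℕ) (U : Finset (Fin n)),
      eval (fun i => if i ∉ I ∨ i ∈ U then (1 : ℂ) else 0) (monomial d (coeff d f))
        = coeff d f * (if d.support ∩ I ⊆ U then 1 else 0) := by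
    intro d U
    rw [eval_monomial]
    congr 1
    by_cases h : d.support ∩ I ⊆ U
    · rw [if_pos h]
      rw [Finsupp.prod]
      apply Finset.prod_eq_one
      intro i hi
      have hi := Finsupp.mem_support_iff.1 hi
      have : i ∉ I ∨ i ∈ U := by
        by_cases hiI : i ∈ I
        · exact Or.inr (h (Finset.mem_inter.2 ⟨Finsupp.mem_support_iff.2 hi, hiI⟩))
        · exact Or.inl hiI
      rw [if_pos this, one_pow]
    · rw [if_neg h]
      obtain ⟨i, hi⟩ := Finset.not_subset.1 h
      obtain ⟨hi1, hi2⟩ := Finset.mem_inter.1 hi.1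
      rw [Finsupp.prod]
      refine Finset.prod_eq_zero hi1 ?_
      rw [if_neg (by push_neg; exact ⟨hi2, hi.2⟩)]
      exact zero_pow (Finsupp.mem_support_iff.1 hi1)
  have hevalU : ∀ U : Finset (Fin n),
      eval (fun i => if i ∉ I ∨ i ∈ U then (1 : ℂ) else 0) f
        = ∑ d ∈ f.support, coeff d f * (if d.support ∩ I ⊆ U then 1 else 0) := by
    intro U
    conv_lhs => rw [f.as_sum]
    rw [map_sum]
    exact Finset.sum_congr rfl fun d _ => hmono d U
  calc ∑ U ∈ I.powerset, (-1 : ℂ) ^ U.card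
        * eval (fun i => if i ∉ I ∨ i ∈ U then (1 : ℂ) else 0) f
      = ∑ U ∈ I.powerset, ∑ d ∈ f.support,
          coeff d f * ((-1 : ℂ) ^ U.card * (if d.support ∩ I ⊆ U then 1 else 0)) := by
        refine Finset.sum_congr rfl fun U _ => ?_
        rw [hevalU U, Finset.mul_sum]
        exact Finset.sum_congr rfl fun d _ => by ring
    _ = ∑ d ∈ f.support, coeff d f * ∑ U ∈ I.powerset,
          (-1 : ℂ) ^ U.card * (if d.support ∩ I ⊆ U then 1 else 0) := by
        rw [Finset.sum_comm]
        exact Finset.sum_congr rfl fun d _ => by rw [Finset.mul_sum]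
    _ = 0 := by
        refine Finset.sum_eq_zero fun d hd => ?_
        have hsub : d.support ∩ I ⊆ I := Finset.inter_subset_right
        have hcard : (d.support ∩ I).card < I.card := by
          have h1 : (d.support ∩ I).card ≤ d.support.card :=
            Finset.card_le_card Finset.inter_subset_left
          have h2 : d.support.card ≤ d.sum fun _ e => e := by
            rw [Finsupp.sum]
            calc d.support.card = ∑ _i ∈ d.support, 1 := by simp
              _ ≤ ∑ i ∈ d.support, d i := Finset.sum_le_sum fun i hi =>
                  Nat.one_le_iff_ne_zero.2 (Finsupp.mem_support_iff.1 hi)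
          have h3 := le_totalDegree hd
          omega
        have hne : d.support ∩ I ≠ I := fun h => by rw [h] at hcard; omega
        rw [alt_sum_superset I (d.support ∩ I) hsub hne, mul_zero]

lemma part1 {n : ℕ} (G : SimpleGraph (Fin n)) (m : ℕ) :
    (∃ z : Fin n → ℂ,
        (∑ i : Fin n, z i) - (m : ℂ) = 0 ∧
        (∀ i : Fin n, z i ^ 2 - z i = 0) ∧
        (∀ i j : Fin n, G.Adj i j → (z i - 1) * (z j - 1) = 0))
      ↔
      (∃ S : Finset (Fin n), S.card = m ∧
        ∀ i j : Fin n, G.Adj i j → i ∈ S ∨ j ∈ S) := by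
  classical
  constructor
  · rintro ⟨z, hsum, hbool, hedge⟩
    have hz01 : ∀ i, z i = 0 ∨ z i = 1 := by
      intro i
      have := hbool i
      have : z i * (z i - 1) = 0 := by linear_combination this
      rcases mul_eq_zero.1 this with h | h
      · exact Or.inl h
      · exact Or.inr (by linear_combination h)
    refine ⟨Finset.univ.filter (fun i => z i = 1), ?_, ?_⟩
    · have : ∑ i : Fin n, z i = ((Finset.univ.filter (fun i => z i = 1)).card : ℂ) := by
        rw [← Finset.sum_boole]
        refine Finset.sum_congr rfl fun i _ => ?_
        rcases hz01 i with h | h <;> simp [h]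
      rw [this] at hsum
      have : ((Finset.univ.filter (fun i => z i = 1)).card : ℂ) = (m : ℂ) := by
        linear_combination hsum
      exact_mod_cast this
    · intro i j hadj
      have := hedge i j hadj
      rcases mul_eq_zero.1 this with h | h
      · exact Or.inl (Finset.mem_filter.2 ⟨Finset.mem_univ _, by linear_combination h⟩)
      · exact Or.inr (Finset.mem_filter.2 ⟨Finset.mem_univ _, by linear_combination h⟩)
  · rintro ⟨S, hcard, hcov⟩
    refine ⟨fun i => if i ∈ S then 1 else 0, ?_, ?_, ?_⟩
    · rw [Finset.sum_boole]
      simp only [Finset.filter_mem_eq_inter, Finset.univ_inter]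
      rw [hcard]; ring
    · intro i; simp only; split <;> norm_num
    · intro i j hadj
      simp only
      rcases hcov i j hadj with h | h
      · rw [if_pos h]; ring
      · rw [if_pos h]; ring

noncomputable def Wpoly {n : ℕ} (T : Finset (Fin n)) : MvPolynomial (Fin n) ℂ :=
  ∏ i ∈ T, (X i - 1)

lemma Wpoly_totalDegree {n : ℕ} (T : Finset (Fin n)) : (Wpoly T).totalDegree ≤ T.card := by
  refine (totalDegree_finset_prod T _).trans ?_
  have h1 : ∀ i : Fin n, (X i - (1 : MvPolynomial (Fin n) ℂ)).totalDegree ≤ 1 := by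
    intro i
    rw [sub_eq_add_neg]
    refine (totalDegree_add _ _).trans ?_
    have : (-1 : MvPolynomial (Fin n) ℂ) = C (-1) := by simp
    rw [totalDegree_X, this, totalDegree_C]
    simp
  refine le_trans (Finset.sum_le_sum (g := fun _ => (1:ℕ)) fun i _ => h1 i) ?_
  simp

lemma hm_cast {n m : ℕ} : (m : MvPolynomial (Fin n) ℂ) = C (m : ℂ) :=
  (map_natCast (C : ℂ →+* MvPolynomial (Fin n) ℂ) m).symm

lemma WTL {n m : ℕ} (T : Finset (Fin n)) :
    Wpoly T * ((∑ i : Fin n, X i) - (m : MvPolynomial (Fin n) ℂ))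
      = (∑ i ∈ T, Wpoly (T.erase i) * ((X i) ^ 2 - X i))
        + (∑ i ∈ Finset.univ \ T, Wpoly (insert i T))
        + C ((n : ℂ) - T.card - m) * Wpoly T := by
  classical
  have hTcard : T.card ≤ n := by simpa using T.card_le_univ
  rw [hm_cast, mul_sub, Finset.mul_sum]
  have hsplit : ∑ i : Fin n, Wpoly T * X i
      = (∑ i ∈ Finset.univ \ T, Wpoly T * X i) + ∑ i ∈ T, Wpoly T * X i :=
    (Finset.sum_sdiff (T.subset_univ)).symm
  rw [hsplit]
  have h1 : ∀ i ∈ T, Wpoly T * X i = Wpoly (T.erase i) * ((X i) ^ 2 - X i) := by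
    intro i hi
    unfold Wpoly
    rw [← Finset.mul_prod_erase T _ hi]
    ring
  have h2 : ∀ i ∈ Finset.univ \ T, Wpoly T * X i = Wpoly (insert i T) + Wpoly T := by
    intro i hi
    have hiT : i ∉ T := (Finset.mem_sdiff.1 hi).2
    unfold Wpoly
    rw [Finset.prod_insert hiT]
    ring
  rw [Finset.sum_congr rfl h1, Finset.sum_congr rfl h2, Finset.sum_add_distrib,
    Finset.sum_const]
  have hcard : (Finset.univ \ T).card = n - T.card := by
    rw [Finset.card_sdiff_of_subset T.subset_univ]
    simp
  rw [hcard]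
  have hC : (n - T.card) • Wpoly T - C (m:ℂ) * Wpoly T = C ((n : ℂ) - T.card - m) * Wpoly T := by
    rw [nsmul_eq_mul]
    have : ((n - T.card : ℕ) : MvPolynomial (Fin n) ℂ) = C (((n - T.card : ℕ) : ℂ)) :=
      (map_natCast (C : ℂ →+* MvPolynomial (Fin n) ℂ) _).symm
    rw [this]
    rw [← sub_mul, ← C_sub]
    congr 2
    push_cast [Nat.cast_sub hTcard]
    ring
  rw [← hC]
  ring

section LB
variable {n : ℕ} {G : SimpleGraph (Fin n)} [DecidableRel G.Adj] {m : ℕ}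

lemma vcPoly_mk (i j : Fin n) : vcPoly (s(i, j)) = (X i - 1) * (X j - 1) := by
  simp [vcPoly]

lemma eval_vcPoly_zero {z : Fin n → ℂ} {e : Sym2 (Fin n)} (he : e ∈ G.edgeFinset)
    (hz : ∀ i j : Fin n, G.Adj i j → (z i - 1) * (z j - 1) = 0) :
    eval z (vcPoly e) = 0 := by
  induction e with
  | _ i j =>
    rw [vcPoly_mk]
    have hadj : G.Adj i j := by
      rw [SimpleGraph.mem_edgeFinset] at he
      exact he
    have := hz i j hadj
    simp only [map_mul, map_sub, eval_X, map_one]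
    exact this

/-- indicator of the complement of `I \ U`. -/
noncomputable def zf (I U : Finset (Fin n)) : Fin n → ℂ :=
  fun i => if i ∉ I ∨ i ∈ U then (1 : ℂ) else 0

lemma zf_bool (I U : Finset (Fin n)) (i : Fin n) : zf I U i ^ 2 - zf I U i = 0 := by
  unfold zf; split <;> norm_num

lemma zf_edge {I : Finset (Fin n)} (hI : IsIndepFinset G I) (U : Finset (Fin n))
    (i j : Fin n) (hadj : G.Adj i j) : (zf I U i - 1) * (zf I U j - 1) = 0 := by
  have : i ∉ I ∨ j ∉ I := by
    by_contra hc
    push_neg at hc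
    exact hI i hc.1 j hc.2 hadj
  rcases this with h | h
  · have : zf I U i = 1 := by unfold zf; rw [if_pos (Or.inl h)]
    rw [this]; ring
  · have : zf I U j = 1 := by unfold zf; rw [if_pos (Or.inl h)]
    rw [this]; ring

lemma zf_sum {I U : Finset (Fin n)} (hU : U ⊆ I) :
    ∑ i : Fin n, zf I U i = (n : ℂ) - I.card + U.card := by
  classical
  unfold zf
  rw [Finset.sum_boole]
  have hfilter : Finset.univ.filter (fun i : Fin n => i ∉ I ∨ i ∈ U) = (I \ U)ᶜ := by
    ext i
    simp only [Finset.mem_filter, Finset.mem_univ, true_and, Finset.mem_compl,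
      Finset.mem_sdiff]
    constructor
    · rintro (h | h) ⟨h1, h2⟩ <;> tauto
    · intro h
      by_cases hiI : i ∈ I
      · exact Or.inr (by tauto)
      · exact Or.inl hiI
  rw [hfilter, Finset.card_compl, Finset.card_sdiff_of_subset hU]
  have h1 : U.card ≤ I.card := Finset.card_le_card hU
  have h2 : I.card ≤ n := by simpa using I.card_le_univ
  have h3 : Fintype.card (Fin n) = n := Fintype.card_fin n
  rw [h3]
  push_cast [Nat.cast_sub (by omega : I.card - U.card ≤ n), Nat.cast_sub h1]
  ring

lemma lower_bound
    (hinf : ¬ (∃ z : Fin n → ℂ,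
        (∑ i : Fin n, z i) - (m : ℂ) = 0 ∧
        (∀ i : Fin n, z i ^ 2 - z i = 0) ∧
        (∀ i j : Fin n, G.Adj i j → (z i - 1) * (z j - 1) = 0)))
    (A : MvPolynomial (Fin n) ℂ) (P : Fin n → MvPolynomial (Fin n) ℂ)
    (Q : Sym2 (Fin n) → MvPolynomial (Fin n) ℂ)
    (hcert : A * ((∑ i : Fin n, X i) - (m : MvPolynomial (Fin n) ℂ)) +
            (∑ i : Fin n, P i * ((X i) ^ 2 - X i)) +
            (∑ e ∈ G.edgeFinset, Q e * vcPoly e) = 1) :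
    indepNum n G ≤ A.totalDegree := by
  classical
  obtain ⟨I, hI, hIcard⟩ := exists_max_indep (G := G)
  by_contra hlt
  push_neg at hlt
  rw [← hIcard] at hlt
  set c : ℂ := (n : ℂ) - I.card - m with hc
  -- no zero: denominators are nonzero
  have hne : ∀ U : Finset (Fin n), U ⊆ I → c + U.card ≠ 0 := by
    intro U hU h0
    apply hinf
    refine ⟨zf I U, ?_, zf_bool I U, fun i j hadj => zf_edge hI U i j hadj⟩
    rw [zf_sum hU]
    rw [hc] at h0
    linear_combination h0
  -- evaluation of the certificate
  have heval : ∀ U : Finset (Fin n), U ⊆ I →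
      eval (zf I U) A * (c + U.card) = 1 := by
    intro U hU
    have := congrArg (eval (zf I U)) hcert
    simp only [map_add, map_mul, map_sum, map_sub, map_one, eval_X, map_natCast,
      map_pow] at this
    rw [zf_sum hU] at this
    have hb : ∀ i : Fin n, zf I U i ^ 2 - zf I U i = 0 := zf_bool I U
    have hedge : ∀ e ∈ G.edgeFinset, eval (zf I U) (Q e) * eval (zf I U) (vcPoly e) = 0 := by
      intro e he
      rw [eval_vcPoly_zero he (fun i j hadj => zf_edge hI U i j hadj), mul_zero]
    rw [Finset.sum_congr rfl (fun i _ => by rw [hb i, mul_zero]),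
      Finset.sum_congr rfl hedge] at this
    simp only [Finset.sum_const_zero, add_zero] at this
    rw [← this, hc]
    ring
  have hevalA : ∀ U : Finset (Fin n), U ⊆ I →
      eval (zf I U) A = 1 / (c + U.card) := by
    intro U hU
    field_simp [hne U hU]
    linear_combination heval U hU
  -- alternating sum vanishes by degree
  have hvanish := lowdeg_altsum I A hlt
  have hrw : ∑ U ∈ I.powerset, (-1 : ℂ) ^ U.card
      * eval (fun i => if i ∉ I ∨ i ∈ U then (1 : ℂ) else 0) A
      = ∑ U ∈ I.powerset, (-1 : ℂ) ^ U.card * (1 / (c + U.card)) := by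
    refine Finset.sum_congr rfl fun U hU => ?_
    rw [← hevalA U (Finset.mem_powerset.1 hU)]
    rfl
  rw [hrw] at hvanish
  rw [Finset.sum_powerset_apply_card (fun j => (-1 : ℂ) ^ j * (1 / (c + j)))] at hvanish
  have hne' : ∀ j ∈ range (I.card + 1), c + j ≠ 0 := by
    intro j hj
    obtain ⟨U, hU, hUcard⟩ := Finset.exists_subset_card_eq
      (Nat.lt_succ_iff.1 (Finset.mem_range.1 hj))
    have := hne U hU
    rw [hUcard] at this
    exact this
  rw [Finset.sum_congr rfl (fun j _ => by
    rw [nsmul_eq_mul]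
    ring_nf : ∀ j ∈ range (I.card + 1),
      (I.card.choose j) • ((-1 : ℂ) ^ j * (1 / (c + j)))
        = (-1 : ℂ) ^ j * (I.card.choose j) / (c + j))] at hvanish
  rw [binom_frac I.card c hne'] at hvanish
  have hfac : (I.card.factorial : ℂ) ≠ 0 := Nat.cast_ne_zero.2 (Nat.factorial_ne_zero _)
  have hprod : ∏ j ∈ range (I.card + 1), (c + j) ≠ 0 := Finset.prod_ne_zero_iff.2 hne'
  exact (div_ne_zero hfac hprod) hvanish

end LB

set_option maxHeartbeats 2000000 in
lemma certificate {n : ℕ} {G : SimpleGraph (Fin n)} [DecidableRel G.Adj] {m : ℕ}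
    (hinf : ¬ (∃ z : Fin n → ℂ,
        (∑ i : Fin n, z i) - (m : ℂ) = 0 ∧
        (∀ i : Fin n, z i ^ 2 - z i = 0) ∧
        (∀ i j : Fin n, G.Adj i j → (z i - 1) * (z j - 1) = 0))) :
    ∃ (A : MvPolynomial (Fin n) ℂ) (P : Fin n → MvPolynomial (Fin n) ℂ)
        (Q : Sym2 (Fin n) → MvPolynomial (Fin n) ℂ),
      A * ((∑ i : Fin n, X i) - (m : MvPolynomial (Fin n) ℂ)) +
          (∑ i : Fin n, P i * ((X i) ^ 2 - X i)) +
          (∑ e ∈ G.edgeFinset, Q e * vcPoly e) = 1 ∧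
      max A.totalDegree
          (max (Finset.univ.sup fun i => (P i).totalDegree)
            (G.edgeFinset.sup fun e => (Q e).totalDegree)) ≤ indepNum n G := by
  classical
  obtain ⟨I, hI, hIcard⟩ := exists_max_indep (G := G)
  set κ : ℂ := (m : ℂ) - n with hκdef
  -- nonvanishing of denominators
  have hκ : ∀ j : ℕ, j ≤ indepNum n G → κ + j ≠ 0 := by
    intro j hj h0
    apply hinf
    obtain ⟨U, hUI, hUcard⟩ := Finset.exists_subset_card_eq (le_of_le_of_eq hj hIcard.symm)
    have hjn : j ≤ n := hUcard ▸ (by simpa using U.card_le_univ)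
    refine ⟨fun i => if i ∈ U then 0 else 1, ?_, ?_, ?_⟩
    · have hsum : ∑ i : Fin n, (if i ∈ U then (0:ℂ) else 1)
          = ((n - j : ℕ) : ℂ) := by
        rw [Finset.sum_congr rfl (fun i _ => by
          by_cases h : i ∈ U <;> simp [h] : ∀ i ∈ Finset.univ,
            (if i ∈ U then (0:ℂ) else 1) = if i ∉ U then 1 else 0)]
        rw [Finset.sum_boole]
        congr 1
        have : Finset.univ.filter (fun i => i ∉ U) = Uᶜ := by
          ext i; simp
        rw [this, Finset.card_compl, hUcard]
        simp
      rw [hsum]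
      rw [hκdef] at h0
      push_cast [Nat.cast_sub hjn]
      linear_combination -h0
    · intro i; simp only; split <;> norm_num
    · intro i j' hadj
      simp only
      have hU : IsIndepFinset G U := indep_subset hI hUI
      have : i ∉ U ∨ j' ∉ U := by
        by_contra hc; push_neg at hc
        exact hU i hc.1 j' hc.2 hadj
      rcases this with h | h
      · rw [if_neg h]; ring
      · rw [if_neg h]; ring
  have hκ0 : κ ≠ 0 := by simpa using hκ 0 (Nat.zero_le _)
  -- coefficients
  set d : ℕ → ℂ := fun j => -(j.factorial : ℂ) / ∏ t ∈ Finset.range (j+1), (κ + t) with hd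
  have hrec : ∀ j : ℕ, j ≤ indepNum n G →
      (j : ℂ) * d (j - 1) + d j * ((n : ℂ) - j - m) = if j = 0 then 1 else 0 := by
    intro j hj
    have hprod_ne : ∀ k : ℕ, k ≤ j → (∏ t ∈ Finset.range (k+1), (κ + t)) ≠ 0 := by
      intro k hk
      exact Finset.prod_ne_zero_iff.2 fun t ht =>
        hκ t (le_trans (Nat.lt_succ_iff.1 (Finset.mem_range.1 ht)) (le_trans hk hj))
    have hnm : (n : ℂ) - j - m = -(κ + j) := by rw [hκdef]; ring
    rw [hnm]
    cases j with
    | zero =>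
      simp only [Nat.cast_zero, zero_mul, zero_add, if_pos rfl]
      rw [hd]
      simp only [Nat.factorial_zero, Nat.cast_one]
      rw [Finset.prod_range_one]
      field_simp
      simp [hκ0]
    | succ jj =>
      rw [if_neg (Nat.succ_ne_zero jj)]
      have hne1 : (∏ t ∈ Finset.range (jj+1), (κ + t)) ≠ 0 := hprod_ne jj (Nat.le_succ jj)
      have hne2 : κ + ((jj+1 : ℕ) : ℂ) ≠ 0 := hκ (jj+1) hj
      have h1 : d (jj + 1) * (κ + ((jj+1 : ℕ) : ℂ)) = -(((jj+1).factorial : ℂ))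
          / ∏ t ∈ Finset.range (jj+1), (κ + t) := by
        have hsplit : d (jj+1) = (-(((jj+1).factorial : ℂ))
            / ∏ t ∈ Finset.range (jj+1), (κ + t)) / (κ + ((jj+1:ℕ):ℂ)) := by
          rw [hd]
          simp only
          rw [Finset.prod_range_succ, ← div_div]
        rw [hsplit, div_mul_cancel₀ _ hne2]
      have h2 : ((jj + 1 : ℕ) : ℂ) * d ((jj + 1) - 1)
          = (((jj+1) : ℕ) : ℂ) * (-(jj.factorial : ℂ) / ∏ t ∈ Finset.range (jj+1), (κ + t)) := by
        norm_num [hd]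
      rw [h2]
      have h3 : d (jj+1) * -(κ + ((jj+1 : ℕ) : ℂ)) = -(d (jj + 1) * (κ + ((jj+1:ℕ) : ℂ))) := by
        ring
      rw [h3, h1, Nat.factorial_succ]
      push_cast
      ring
  -- the family of independent sets
  set Ind : Finset (Finset (Fin n)) :=
    Finset.univ.filter (fun T : Finset (Fin n) => IsIndepFinset G T) with hInd
  have hmemInd : ∀ T : Finset (Fin n), T ∈ Ind ↔ IsIndepFinset G T := by
    intro T; rw [hInd]; simp
  have hcardle : ∀ T ∈ Ind, T.card ≤ indepNum n G := fun T hT =>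
    indep_card_le ((hmemInd T).1 hT)
  have hemptyInd : (∅ : Finset (Fin n)) ∈ Ind :=
    (hmemInd ∅).2 (fun u hu => by simp at hu)
  -- choice of a neighbor inside T for a vertex ruining independence
  set nb : Finset (Fin n) × Fin n → Fin n := fun p =>
    if h : ∃ v, v ∈ p.1 ∧ G.Adj p.2 v then h.choose else p.2 with hnbdef
  set Spair : Finset (Finset (Fin n) × Fin n) :=
    (Ind ×ˢ Finset.univ).filter
      (fun p => p.2 ∉ p.1 ∧ ¬ IsIndepFinset G (insert p.2 p.1)) with hSpair
  set S1' : Finset (Finset (Fin n) × Fin n) :=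
    (Ind ×ˢ Finset.univ).filter
      (fun p => p.2 ∉ p.1 ∧ IsIndepFinset G (insert p.2 p.1)) with hS1'
  set S2 : Finset (Finset (Fin n) × Fin n) :=
    (Ind ×ˢ Finset.univ).filter (fun p => p.2 ∈ p.1) with hS2
  have hnb : ∀ p ∈ Spair, nb p ∈ p.1 ∧ G.Adj p.2 (nb p) := by
    intro p hp
    rw [hSpair, Finset.mem_filter, Finset.mem_product] at hp
    obtain ⟨⟨hT, -⟩, hni, hnind⟩ := hp
    have hTind := (hmemInd p.1).1 hT
    have hex : ∃ v, v ∈ p.1 ∧ G.Adj p.2 v := by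
      unfold IsIndepFinset at hnind
      push_neg at hnind
      obtain ⟨u, hu, v, hv, huv⟩ := hnind
      rcases Finset.mem_insert.1 hu with rfl | hu'
      · rcases Finset.mem_insert.1 hv with rfl | hv'
        · exact absurd huv (G.irrefl)
        · exact ⟨v, hv', huv⟩
      · rcases Finset.mem_insert.1 hv with rfl | hv'
        · exact ⟨u, hu', G.adj_symm huv⟩
        · exact absurd huv (hTind u hu' v hv')
    rw [hnbdef]
    simp only
    rw [dif_pos hex]
    exact ⟨hex.choose_spec.1, hex.choose_spec.2⟩
  have hniSpair : ∀ p ∈ Spair, p.2 ∉ p.1 := by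
    intro p hp
    rw [hSpair, Finset.mem_filter] at hp
    exact hp.2.1
  -- the certificate
  set A : MvPolynomial (Fin n) ℂ := ∑ T ∈ Ind, C (d T.card) * Wpoly T with hA
  set P : Fin n → MvPolynomial (Fin n) ℂ := fun i =>
    -∑ T ∈ Ind.filter (fun T => i ∈ T), C (d T.card) * Wpoly (T.erase i) with hP
  set Q : Sym2 (Fin n) → MvPolynomial (Fin n) ℂ := fun e =>
    -∑ p ∈ Spair.filter (fun p => s(p.2, nb p) = e),
      C (d p.1.card) * Wpoly (p.1.erase (nb p)) with hQ
  refine ⟨A, P, Q, ?_, ?_⟩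
  · -- the polynomial identity
    have hAL : A * ((∑ i : Fin n, X i) - (m : MvPolynomial (Fin n) ℂ))
        = (∑ p ∈ S2, C (d p.1.card) * (Wpoly (p.1.erase p.2) * ((X p.2) ^ 2 - X p.2)))
          + ((∑ p ∈ S1', C (d p.1.card) * Wpoly (insert p.2 p.1))
            + (∑ p ∈ Spair, C (d p.1.card) * Wpoly (insert p.2 p.1)))
          + (∑ T ∈ Ind, C (d T.card * ((n : ℂ) - T.card - m)) * Wpoly T) := by
      rw [hA, Finset.sum_mul]
      rw [Finset.sum_congr rfl (fun T _ => by
        rw [mul_assoc, WTL T, mul_add, mul_add, Finset.mul_sum, Finset.mul_sum,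
          ← mul_assoc, ← C_mul] : ∀ T ∈ Ind,
        (C (d T.card) * Wpoly T) * ((∑ i : Fin n, X i) - (m : MvPolynomial (Fin n) ℂ))
          = (∑ i ∈ T, C (d T.card) * (Wpoly (T.erase i) * ((X i) ^ 2 - X i)))
            + (∑ i ∈ Finset.univ \ T, C (d T.card) * Wpoly (insert i T))
            + C (d T.card * ((n : ℂ) - T.card - m)) * Wpoly T)]
      rw [Finset.sum_add_distrib, Finset.sum_add_distrib]
      congr 1
      congr 1
      · -- boolean part
        exact (Finset.sum_finset_product S2 Ind (fun T => T)
          (fun p => by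
            rw [hS2]
            simp only [Finset.mem_filter, Finset.mem_product, Finset.mem_univ,
              true_and, and_true]
            try tauto)
          (f := fun p => C (d p.1.card) * (Wpoly (p.1.erase p.2) * ((X p.2) ^ 2 - X p.2)))).symm
      · -- insertion part, split into independent / non-independent
        rw [Finset.sum_congr rfl (fun T _ =>
          (Finset.sum_filter_add_sum_filter_not (Finset.univ \ T)
            (fun i => IsIndepFinset G (insert i T))
            (fun i => C (d T.card) * Wpoly (insert i T))).symm)]
        rw [Finset.sum_add_distrib]
        congr 1
        · exact (Finset.sum_finset_product S1' Ind
            (fun T => (Finset.univ \ T).filter (fun i => IsIndepFinset G (insert i T)))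
            (fun p => by
              rw [hS1']
              simp only [Finset.mem_filter, Finset.mem_product, Finset.mem_sdiff,
                Finset.mem_univ, true_and, and_true]
              try tauto)
            (f := fun p => C (d p.1.card) * Wpoly (insert p.2 p.1))).symm
        · exact (Finset.sum_finset_product Spair Ind
            (fun T => (Finset.univ \ T).filter (fun i => ¬ IsIndepFinset G (insert i T)))
            (fun p => by
              rw [hSpair]
              simp only [Finset.mem_filter, Finset.mem_product, Finset.mem_sdiff,
                Finset.mem_univ, true_and, and_true]
              try tauto)
            (f := fun p => C (d p.1.card) * Wpoly (insert p.2 p.1))).symm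
    have hPsum : ∑ i : Fin n, P i * ((X i) ^ 2 - X i)
        = -∑ p ∈ S2, C (d p.1.card) * (Wpoly (p.1.erase p.2) * ((X p.2) ^ 2 - X p.2)) := by
      rw [Finset.sum_congr rfl (fun i _ => by
        rw [hP]
        simp only
        rw [neg_mul, Finset.sum_mul] : ∀ i ∈ Finset.univ,
          P i * ((X i) ^ 2 - X i)
            = -∑ T ∈ Ind.filter (fun T => i ∈ T),
                (C (d T.card) * Wpoly (T.erase i)) * ((X i) ^ 2 - X i))]
      rw [Finset.sum_neg_distrib, neg_inj]
      refine Eq.trans ?_ (Finset.sum_finset_product_right S2 Finset.univ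
        (fun i => Ind.filter (fun T => i ∈ T))
        (fun p => by
          rw [hS2]
          simp only [Finset.mem_filter, Finset.mem_product, Finset.mem_univ,
            true_and, and_true]
          try tauto)
        (f := fun p => C (d p.1.card) * (Wpoly (p.1.erase p.2) * ((X p.2) ^ 2 - X p.2)))).symm
      refine Finset.sum_congr rfl fun i _ => Finset.sum_congr rfl fun T _ => ?_
      ring
    have hQsum : ∑ e ∈ G.edgeFinset, Q e * vcPoly e
        = -∑ p ∈ Spair, C (d p.1.card) * Wpoly (insert p.2 p.1) := by
      have hmap : ∀ p ∈ Spair, s(p.2, nb p) ∈ G.edgeFinset := by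
        intro p hp
        rw [SimpleGraph.mem_edgeFinset]
        exact (hnb p hp).2
      have hfib := Finset.sum_fiberwise_of_maps_to hmap
        (fun p => C (d p.1.card) * Wpoly (insert p.2 p.1))
      rw [← hfib, ← Finset.sum_neg_distrib]
      refine Finset.sum_congr rfl fun e he => ?_
      rw [hQ]
      simp only
      rw [neg_mul, Finset.sum_mul, neg_inj]
      refine Finset.sum_congr rfl fun p hp => ?_
      rw [Finset.mem_filter] at hp
      obtain ⟨hpS, hpe⟩ := hp
      have hin : nb p ∈ p.1 := (hnb p hpS).1
      have hni : p.2 ∉ p.1 := hniSpair p hpS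
      rw [← hpe, vcPoly_mk]
      unfold Wpoly
      rw [Finset.prod_insert hni, ← Finset.mul_prod_erase p.1 _ hin]
      ring
    have hbij : ∑ p ∈ S1', C (d p.1.card) * Wpoly (insert p.2 p.1)
        = ∑ q ∈ S2, C (d (q.1.card - 1)) * Wpoly q.1 := by
      refine Finset.sum_nbij' (fun p => (insert p.2 p.1, p.2)) (fun q => (q.1.erase q.2, q.2))
        ?_ ?_ ?_ ?_ ?_
      · intro p hp
        rw [hS1', Finset.mem_filter, Finset.mem_product] at hp
        rw [hS2, Finset.mem_filter, Finset.mem_product]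
        exact ⟨⟨(hmemInd _).2 hp.2.2, Finset.mem_univ _⟩, Finset.mem_insert_self _ _⟩
      · intro q hq
        rw [hS2, Finset.mem_filter, Finset.mem_product] at hq
        rw [hS1', Finset.mem_filter, Finset.mem_product]
        have hqind := (hmemInd q.1).1 hq.1.1
        refine ⟨⟨(hmemInd _).2 (indep_subset hqind (Finset.erase_subset _ _)),
          Finset.mem_univ _⟩, Finset.notMem_erase _ _, ?_⟩
        rw [Finset.insert_erase hq.2]
        exact hqind
      · intro p hp
        rw [hS1', Finset.mem_filter] at hp
        simp only
        rw [Finset.erase_insert hp.2.1]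
      · intro q hq
        rw [hS2, Finset.mem_filter] at hq
        simp only
        rw [Finset.insert_erase hq.2]
      · intro p hp
        rw [hS1', Finset.mem_filter] at hp
        simp only
        rw [Finset.card_insert_of_notMem hp.2.1]
        simp
    have hS2sum : ∑ q ∈ S2, C (d (q.1.card - 1)) * Wpoly q.1
        = ∑ T ∈ Ind, C ((T.card : ℂ) * d (T.card - 1)) * Wpoly T := by
      rw [Finset.sum_finset_product S2 Ind (fun T => T)
        (fun p => by
          rw [hS2]
          simp only [Finset.mem_filter, Finset.mem_product, Finset.mem_univ,
            true_and, and_true]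
          try tauto)
        (f := fun q => C (d (q.1.card - 1)) * Wpoly q.1)]
      refine Finset.sum_congr rfl fun T _ => ?_
      simp only
      rw [Finset.sum_const, nsmul_eq_mul]
      rw [← map_natCast (C : ℂ →+* MvPolynomial (Fin n) ℂ) T.card, ← mul_assoc, ← C_mul]
    have hfinal : (∑ T ∈ Ind, C ((T.card : ℂ) * d (T.card - 1)) * Wpoly T)
        + (∑ T ∈ Ind, C (d T.card * ((n : ℂ) - T.card - m)) * Wpoly T) = 1 := by
      rw [← Finset.sum_add_distrib]
      rw [Finset.sum_congr rfl (fun T hT => by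
        rw [← add_mul, ← C_add, hrec T.card (hcardle T hT)] : ∀ T ∈ Ind,
          C ((T.card : ℂ) * d (T.card - 1)) * Wpoly T
            + C (d T.card * ((n : ℂ) - T.card - m)) * Wpoly T
          = C (if T.card = 0 then (1:ℂ) else 0) * Wpoly T)]
      rw [Finset.sum_eq_single ∅ (fun T _ hTne => by
          rw [if_neg (fun h => hTne (Finset.card_eq_zero.1 h))]
          simp)
        (fun h => absurd hemptyInd h)]
      simp [Wpoly]
    rw [hAL, hPsum, hQsum]
    rw [hbij, hS2sum]
    linear_combination hfinal
  · -- degree bound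
    have hdegA : A.totalDegree ≤ indepNum n G := by
      rw [hA]
      refine (totalDegree_finset_sum _ _).trans (Finset.sup_le fun T hT => ?_)
      refine (totalDegree_mul _ _).trans ?_
      rw [totalDegree_C]
      rw [zero_add]
      exact le_trans (Wpoly_totalDegree T) (hcardle T hT)
    have hdegP : ∀ i : Fin n, (P i).totalDegree ≤ indepNum n G := by
      intro i
      rw [hP]
      simp only
      rw [totalDegree_neg]
      refine (totalDegree_finset_sum _ _).trans (Finset.sup_le fun T hT => ?_)
      rw [Finset.mem_filter] at hT
      refine (totalDegree_mul _ _).trans ?_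
      rw [totalDegree_C, zero_add]
      refine le_trans (Wpoly_totalDegree _) ?_
      exact le_trans (Finset.card_le_card (Finset.erase_subset _ _)) (hcardle T hT.1)
    have hdegQ : ∀ e : Sym2 (Fin n), (Q e).totalDegree ≤ indepNum n G := by
      intro e
      rw [hQ]
      simp only
      rw [totalDegree_neg]
      refine (totalDegree_finset_sum _ _).trans (Finset.sup_le fun p hp => ?_)
      rw [Finset.mem_filter] at hp
      have hpInd : p.1 ∈ Ind := by
        have := hp.1
        rw [hSpair, Finset.mem_filter, Finset.mem_product] at this
        exact this.1.1
      refine (totalDegree_mul _ _).trans ?_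
      rw [totalDegree_C, zero_add]
      refine le_trans (Wpoly_totalDegree _) ?_
      exact le_trans (Finset.card_le_card (Finset.erase_subset _ _)) (hcardle _ hpInd)
    exact max_le hdegA (max_le (Finset.sup_le fun i _ => hdegP i)
      (Finset.sup_le fun e _ => hdegQ e))


/-- The system `(∑ x_i) − m`, `x_i² − x_i`,
`(x_i − 1)(x_j − 1)` (edges) has a common zero over `ℂ` iff `G` has a vertex
cover of size `m`; and if it has no common zero, the minimum degree of a
Nullstellensatz certificate for the system equals the independence number
`α(G)`. -/
theorem stmt14 (n : ℕ) (G : SimpleGraph (Fin n)) [DecidableRel G.Adj] (m : ℕ) :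
    ((∃ z : Fin n → ℂ,
        (∑ i : Fin n, z i) - (m : ℂ) = 0 ∧
        (∀ i : Fin n, z i ^ 2 - z i = 0) ∧
        (∀ i j : Fin n, G.Adj i j → (z i - 1) * (z j - 1) = 0))
      ↔
      (∃ S : Finset (Fin n), S.card = m ∧
        ∀ i j : Fin n, G.Adj i j → i ∈ S ∨ j ∈ S)) ∧
    (¬ (∃ z : Fin n → ℂ,
        (∑ i : Fin n, z i) - (m : ℂ) = 0 ∧
        (∀ i : Fin n, z i ^ 2 - z i = 0) ∧
        (∀ i j : Fin n, G.Adj i j → (z i - 1) * (z j - 1) = 0)) →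
      (∃ (A : MvPolynomial (Fin n) ℂ) (P : Fin n → MvPolynomial (Fin n) ℂ)
          (Q : Sym2 (Fin n) → MvPolynomial (Fin n) ℂ),
        A * ((∑ i : Fin n, X i) - (m : MvPolynomial (Fin n) ℂ)) +
            (∑ i : Fin n, P i * ((X i) ^ 2 - X i)) +
            (∑ e ∈ G.edgeFinset, Q e * vcPoly e) = 1 ∧
        max A.totalDegree
            (max (Finset.univ.sup fun i => (P i).totalDegree)
              (G.edgeFinset.sup fun e => (Q e).totalDegree)) = indepNum n G) ∧
      (∀ (A : MvPolynomial (Fin n) ℂ) (P : Fin n → MvPolynomial (Fin n) ℂ)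
          (Q : Sym2 (Fin n) → MvPolynomial (Fin n) ℂ),
        A * ((∑ i : Fin n, X i) - (m : MvPolynomial (Fin n) ℂ)) +
            (∑ i : Fin n, P i * ((X i) ^ 2 - X i)) +
            (∑ e ∈ G.edgeFinset, Q e * vcPoly e) = 1 →
        indepNum n G ≤
          max A.totalDegree
            (max (Finset.univ.sup fun i => (P i).totalDegree)
              (G.edgeFinset.sup fun e => (Q e).totalDegree)))) := by
  refine ⟨part1 G m, fun hinf => ⟨?_, ?_⟩⟩
  · obtain ⟨A, P, Q, hid, hle⟩ := certificate hinf
    refine ⟨A, P, Q, hid, le_antisymm hle ?_⟩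
    exact le_trans (lower_bound hinf A P Q hid) (le_max_left _ _)
  · intro A P Q hid
    exact le_trans (lower_bound hinf A P Q hid) (le_max_left _ _)
end

section
/- Let G be a finite simple graph with vertex set {1,…,n}, edge set E, no isolated vertices, and let m be a natural number. The system consisting of the polynomials (∑_{{i,j}∈E} x_{ij}) − m, x_{ij}² − x_{ij} for all {i,j} ∈ E, and ∏_{j∈N(i)} (x_{ij} − 1) for all i ∈ {1,…,n} has a common zero over ℂ if and only if G has an edge cover of size m. Furthermore, if the system has no common zero, then the minimum degree of a Nullstellensatz certificate for this system equals the maximum number of edges of a subgraph of G that cages no vertex of G, i.e., the maximum cardinality of a set E' ⊆ E such that for every vertex v of G some edge of G incident to v does not belong to E'. -/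
open MvPolynomial Finset

/-- The edge `{i, j}` of `G`, for `j` a neighbor of `i`, as an element of the
edge set. -/
def incEdge {n : ℕ} (G : SimpleGraph (Fin n)) [DecidableRel G.Adj] (i : Fin n)
    (j : G.neighborFinset i) : ↥G.edgeSet :=
  ⟨s(i, (j : Fin n)), G.mem_edgeSet.2 (by
    have h := j.2
    rwa [SimpleGraph.mem_neighborFinset] at h)⟩

/-- The polynomial `∏_{j ∈ N(i)} (x_{ij} − 1)` of the edge-cover system. -/
noncomputable def ecVertexPoly {n : ℕ} (G : SimpleGraph (Fin n))
    [DecidableRel G.Adj] (i : Fin n) : MvPolynomial ↥G.edgeSet ℂ :=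
  ∏ j : G.neighborFinset i, (X (incEdge G i j) - 1)

/-- The maximum number of edges of a subgraph of `G` caging no vertex of `G`:
the maximum cardinality of a set `E'` of edges such that every vertex has
some incident edge of `G` not belonging to `E'`. -/
noncomputable def cageFreeNum {n : ℕ} (G : SimpleGraph (Fin n))
    [DecidableRel G.Adj] : ℕ :=
  sSup {k : ℕ | ∃ E' : Finset ↥G.edgeSet,
    (∀ v : Fin n, ∃ e : ↥G.edgeSet, v ∈ (e : Sym2 (Fin n)) ∧ e ∉ E') ∧
    E'.card = k}

namespace Stmt15Aux




variable {σ : Type*} [Fintype σ] [DecidableEq σ]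

/-- 0/1 point of the cube given by a finset. -/
noncomputable def chi (S : Finset σ) : σ → ℂ := fun e => if e ∈ S then 1 else 0

lemma eval_chi_monomial (S : Finset σ) (α : σ →₀ ℕ) (c : ℂ) :
    eval (chi S) (monomial α c) = if α.support ⊆ S then c else 0 := by
  rw [eval_monomial]
  unfold Finsupp.prod
  split_ifs with h
  · rw [Finset.prod_congr rfl (fun e he => ?_), Finset.prod_const_one, mul_one]
    have he1 : chi S e = 1 := if_pos (h he)
    simp [he1]
  · obtain ⟨e, he, heS⟩ := Finset.not_subset.1 h
    rw [Finset.prod_eq_zero he, mul_zero]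
    have he0 : chi S e = 0 := if_neg heS
    simp only [he0]
    exact zero_pow (Finsupp.mem_support_iff.1 he)

lemma sum_chi (S : Finset σ) : ∑ e : σ, chi S e = (S.card : ℂ) := by
  unfold chi
  rw [Finset.sum_boole]
  congr 1
  rw [Finset.filter_mem_eq_inter, Finset.univ_inter]

/-- multilinearity -/
def IsML (p : MvPolynomial σ ℂ) : Prop := ∀ α ∈ p.support, ∀ e, α e ≤ 1

lemma IsML_zero : IsML (0 : MvPolynomial σ ℂ) := by
  intro α hα
  simp at hα

lemma IsML_add {p q : MvPolynomial σ ℂ} (hp : IsML p) (hq : IsML q) : IsML (p + q) := by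
  intro α hα e
  have := Finsupp.support_add hα
  rcases Finset.mem_union.1 this with h | h
  · exact hp α h e
  · exact hq α h e

lemma IsML_sum {ι : Type*} (s : Finset ι) (f : ι → MvPolynomial σ ℂ)
    (h : ∀ i ∈ s, IsML (f i)) : IsML (∑ i ∈ s, f i) := by
  classical
  induction s using Finset.induction_on with
  | empty => simpa using IsML_zero
  | @insert a s' hx ih =>
    rw [Finset.sum_insert hx]
    exact IsML_add (h a (Finset.mem_insert_self a s'))
      (ih fun i hi => h i (Finset.mem_insert_of_mem hi))

lemma ml_vanish (p : MvPolynomial σ ℂ) (hml : IsML p)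
    (hv : ∀ S : Finset σ, eval (chi S) p = 0) : p = 0 := by
  by_contra hp
  have hne : p.support.Nonempty := by
    rwa [Finset.nonempty_iff_ne_empty, ne_eq, MvPolynomial.support_eq_empty]
  obtain ⟨α, hα, hmin⟩ := Finset.exists_min_image p.support (fun β => β.support.card) hne
  have h0 := hv α.support
  rw [MvPolynomial.as_sum p, map_sum] at h0
  rw [Finset.sum_eq_single α] at h0
  · rw [eval_chi_monomial, if_pos (subset_refl _)] at h0
    exact (MvPolynomial.mem_support_iff.1 hα) h0
  · intro β hβ hne
    rw [eval_chi_monomial, if_neg]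
    intro hsub
    apply hne
    have hcard := hmin β hβ
    have heq : β.support = α.support := Finset.eq_of_subset_of_card_le hsub hcard
    ext e
    by_cases he : e ∈ α.support
    · have h1 : α e = 1 := le_antisymm (hml α hα e) (Finsupp.mem_support_iff.1 he |> Nat.one_le_iff_ne_zero.2)
      have h2 : β e = 1 := le_antisymm (hml β hβ e) (by
        have : e ∈ β.support := heq ▸ he
        exact Nat.one_le_iff_ne_zero.2 (Finsupp.mem_support_iff.1 this))
      rw [h1, h2]
    · have h1 : α e = 0 := Finsupp.notMem_support_iff.1 he
      have h2 : β e = 0 := Finsupp.notMem_support_iff.1 (heq ▸ he)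
      rw [h1, h2]
  · intro h
    exact absurd hα h



lemma eval_chi_bool (S : Finset σ) (e : σ) :
    eval (chi S) ((X e) ^ 2 - X e : MvPolynomial σ ℂ) = 0 := by
  simp only [map_sub, map_pow, eval_X, chi]
  split_ifs <;> ring

/-- degree of an exponent vector as a sum over the whole (finite) type -/
def fdeg (α : σ →₀ ℕ) : ℕ := ∑ e : σ, α e

lemma fdeg_eq_sum (α : σ →₀ ℕ) : (α.sum fun _ k => k) = fdeg α :=
  Finsupp.sum_fintype _ _ (fun _ => rfl)

lemma card_support_le_fdeg (α : σ →₀ ℕ) : α.support.card ≤ fdeg α := by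
  unfold fdeg
  calc α.support.card = ∑ _e ∈ α.support, 1 := by rw [Finset.sum_const, smul_eq_mul, mul_one]
  _ ≤ ∑ e ∈ α.support, α e := Finset.sum_le_sum (fun e he => Nat.one_le_iff_ne_zero.2 (Finsupp.mem_support_iff.1 he))
  _ ≤ ∑ e : σ, α e := Finset.sum_le_sum_of_subset (Finset.subset_univ _)

lemma totalDegree_monomial_le' (α : σ →₀ ℕ) (c : ℂ) :
    (monomial α c).totalDegree ≤ fdeg α := by
  by_cases hc : c = 0
  · simp [hc]
  · rw [MvPolynomial.totalDegree_monomial _ hc, fdeg_eq_sum]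

lemma fdeg_le_totalDegree {p : MvPolynomial σ ℂ} {α : σ →₀ ℕ} (h : α ∈ p.support) :
    fdeg α ≤ p.totalDegree := by
  rw [← fdeg_eq_sum]
  exact MvPolynomial.le_totalDegree h

lemma IsML_monomial (α : σ →₀ ℕ) (c : ℂ) (h : ∀ e, α e ≤ 1) : IsML (monomial α c) := by
  intro β hβ e
  rw [MvPolynomial.support_monomial] at hβ
  split_ifs at hβ
  · simp at hβ
  · rw [Finset.mem_singleton] at hβ
    subst hβ
    exact h e

lemma monDiv : ∀ (N : ℕ) (α : σ →₀ ℕ), fdeg α ≤ N → ∀ c : ℂ,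
    ∃ (r : MvPolynomial σ ℂ) (P : σ → MvPolynomial σ ℂ),
      monomial α c = r + ∑ e : σ, P e * ((X e) ^ 2 - X e) ∧ IsML r ∧
      r.totalDegree ≤ fdeg α ∧
      ∀ e, P e = 0 ∨ (P e).totalDegree + 2 ≤ fdeg α := by
  intro N
  induction N with
  | zero =>
    intro α hα c
    refine ⟨monomial α c, fun _ => 0, by simp, IsML_monomial α c ?_,
      totalDegree_monomial_le' α c, fun e => Or.inl rfl⟩
    intro e
    have h1 : α e ≤ fdeg α := Finset.single_le_sum (f := fun e => α e)
      (fun _ _ => Nat.zero_le _) (Finset.mem_univ e)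
    omega
  | succ N ih =>
    intro α hα c
    by_cases hml : ∀ e, α e ≤ 1
    · exact ⟨monomial α c, fun _ => 0, by simp, IsML_monomial α c hml,
        totalDegree_monomial_le' α c, fun e => Or.inl rfl⟩
    push_neg at hml
    obtain ⟨e, he⟩ := hml
    have he2 : 2 ≤ α e := he
    set β := α - Finsupp.single e 1 with hβdef
    set γ := α - Finsupp.single e 2 with hγdef
    have hγα : γ + Finsupp.single e 2 = α :=
      tsub_add_cancel_of_le (Finsupp.single_le_iff.2 he2)
    have hγβ : γ + Finsupp.single e 1 = β := by
      ext e'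
      by_cases h' : e' = e
      · subst h'
        simp only [hβdef, hγdef, Finsupp.add_apply, Finsupp.tsub_apply,
          Finsupp.single_eq_same]
        omega
      · simp only [hβdef, hγdef, Finsupp.add_apply, Finsupp.tsub_apply,
          Finsupp.single_eq_of_ne' (Ne.symm h')]
        omega
    have hfdeg_single : ∀ k : ℕ, fdeg (Finsupp.single e k) = k := by
      intro k
      unfold fdeg
      rw [Finset.sum_eq_single e]
      · simp
      · intro b _ hb
        simp [Finsupp.single_apply, Ne.symm hb]
      · intro h
        exact absurd (Finset.mem_univ e) h
    have hfdeg_add : ∀ a b : σ →₀ ℕ, fdeg (a + b) = fdeg a + fdeg b := by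
      intro a b
      unfold fdeg
      simp [Finsupp.add_apply, Finset.sum_add_distrib]
    have hγdeg : fdeg γ + 2 = fdeg α := by
      have := congrArg fdeg hγα
      rwa [hfdeg_add, hfdeg_single] at this
    have hβdeg : fdeg β + 1 = fdeg α := by
      have h2 := congrArg fdeg hγβ
      rw [hfdeg_add, hfdeg_single] at h2
      omega
    have hβN : fdeg β ≤ N := by omega
    obtain ⟨r, P', hid, hmlr, hdegr, hdegP⟩ := ih β hβN c
    have hXpow : (monomial γ c) * (X e) ^ 2 = monomial α c := by
      rw [MvPolynomial.X_pow_eq_monomial, MvPolynomial.monomial_mul, mul_one, hγα]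
    have hX1 : (monomial γ c) * X e = monomial β c := by
      have : (X e : MvPolynomial σ ℂ) = monomial (Finsupp.single e 1) 1 := by
        rw [← MvPolynomial.X_pow_eq_monomial, pow_one]
      rw [this, MvPolynomial.monomial_mul, mul_one, hγβ]
    refine ⟨r, fun e' => P' e' + if e' = e then monomial γ c else 0, ?_, hmlr, ?_, ?_⟩
    · have hsum : (∑ e' : σ, (P' e' + if e' = e then monomial γ c else 0) * ((X e') ^ 2 - X e'))
          = (∑ e' : σ, P' e' * ((X e') ^ 2 - X e')) + monomial γ c * ((X e) ^ 2 - X e) := by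
        have hterm : ∀ e' : σ, (P' e' + if e' = e then monomial γ c else 0) * ((X e') ^ 2 - X e')
            = P' e' * ((X e') ^ 2 - X e')
              + (if e' = e then monomial γ c * ((X e') ^ 2 - X e') else 0) := by
          intro e'
          split_ifs with h <;> ring
        rw [Finset.sum_congr rfl (fun e' _ => hterm e'), Finset.sum_add_distrib,
          Finset.sum_ite_eq' Finset.univ e
            (fun e' => monomial γ c * ((X e') ^ 2 - X e'))]
        simp
      rw [hsum]
      linear_combination hid - hXpow + hX1
    · omega
    · intro e'
      beta_reduce
      have hαe : α e ≤ fdeg α := Finset.single_le_sum (f := fun e => α e)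
        (fun _ _ => Nat.zero_le _) (Finset.mem_univ e)
      by_cases h' : e' = e
      · right
        rw [if_pos h']
        have hb : (P' e' + monomial γ c).totalDegree ≤ fdeg α - 2 := by
          apply le_trans (MvPolynomial.totalDegree_add _ _)
          apply max_le
          · rcases hdegP e' with h0 | hbd
            · simp [h0]
            · omega
          · have := totalDegree_monomial_le' (σ := σ) γ c
            omega
        omega
      · rw [if_neg h', add_zero]
        rcases hdegP e' with h0 | hbd
        · exact Or.inl h0
        · right
          omega


lemma polyDiv (p : MvPolynomial σ ℂ) :
    ∃ (r : MvPolynomial σ ℂ) (P : σ → MvPolynomial σ ℂ),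
      p = r + ∑ e : σ, P e * ((X e) ^ 2 - X e) ∧ IsML r ∧
      r.totalDegree ≤ p.totalDegree ∧
      ∀ e, P e = 0 ∨ (P e).totalDegree + 2 ≤ p.totalDegree := by
  classical
  have H : ∀ α : σ →₀ ℕ, ∃ rP : (MvPolynomial σ ℂ) × (σ → MvPolynomial σ ℂ),
      monomial α (coeff α p) = rP.1 + ∑ e : σ, rP.2 e * ((X e) ^ 2 - X e) ∧ IsML rP.1 ∧
      rP.1.totalDegree ≤ fdeg α ∧
      ∀ e, rP.2 e = 0 ∨ (rP.2 e).totalDegree + 2 ≤ fdeg α := by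
    intro α
    obtain ⟨r, P, h1, h2, h3, h4⟩ := monDiv (fdeg α) α le_rfl (coeff α p)
    exact ⟨(r, P), h1, h2, h3, h4⟩
  obtain ⟨F, hspec⟩ := Classical.axiomOfChoice H
  refine ⟨∑ α ∈ p.support, (F α).1, fun e => ∑ α ∈ p.support, (F α).2 e, ?_, ?_, ?_, ?_⟩
  · conv_lhs => rw [MvPolynomial.as_sum p]
    have : ∀ α ∈ p.support, monomial α (coeff α p)
        = (F α).1 + ∑ e : σ, (F α).2 e * ((X e) ^ 2 - X e) := fun α _ => (hspec α).1
    rw [Finset.sum_congr rfl this, Finset.sum_add_distrib]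
    congr 1
    rw [Finset.sum_comm]
    exact Finset.sum_congr rfl fun e _ => (Finset.sum_mul _ _ _).symm
  · exact IsML_sum _ _ fun α _ => (hspec α).2.1
  · apply le_trans (MvPolynomial.totalDegree_finset_sum _ _)
    apply Finset.sup_le
    intro α hα
    exact le_trans (hspec α).2.2.1 (fdeg_le_totalDegree hα)
  · intro e
    by_cases hz : ∀ α ∈ p.support, (F α).2 e = 0
    · exact Or.inl (Finset.sum_eq_zero hz)
    · right
      push_neg at hz
      obtain ⟨α₀, hα₀, hne⟩ := hz
      have h2 : 2 ≤ p.totalDegree := by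
        rcases (hspec α₀).2.2.2 e with h | h
        · exact absurd h hne
        · have := fdeg_le_totalDegree hα₀
          omega
      beta_reduce
      have : (∑ α ∈ p.support, (F α).2 e).totalDegree ≤ p.totalDegree - 2 := by
        apply le_trans (MvPolynomial.totalDegree_finset_sum _ _)
        apply Finset.sup_le
        intro α hα
        rcases (hspec α).2.2.2 e with h | h
        · simp [h]
        · have := fdeg_le_totalDegree hα
          omega
      omega

lemma div_of_vanish (p : MvPolynomial σ ℂ) (hv : ∀ S : Finset σ, eval (chi S) p = 0) :
    ∃ P : σ → MvPolynomial σ ℂ,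
      p = ∑ e : σ, P e * ((X e) ^ 2 - X e) ∧
      ∀ e, P e = 0 ∨ (P e).totalDegree + 2 ≤ p.totalDegree := by
  obtain ⟨r, P, hid, hml, _, hP⟩ := polyDiv p
  have hr : r = 0 := by
    apply ml_vanish r hml
    intro S
    have := hv S
    rw [hid, map_add, map_sum] at this
    have hz : ∀ e ∈ Finset.univ (α := σ), eval (chi S) (P e * ((X e) ^ 2 - X e)) = 0 := by
      intro e _
      rw [map_mul, eval_chi_bool, mul_zero]
    rwa [Finset.sum_eq_zero hz, add_zero] at this
  rw [hr, zero_add] at hid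
  exact ⟨P, hid, hP⟩


lemma ratsum : ∀ (d : ℕ) (a : ℂ), (∀ u ∈ Finset.range (d+1), a + u ≠ 0) →
    ∑ u ∈ Finset.range (d+1), ((-1:ℂ))^u * (d.choose u) / (a + u)
      = (d.factorial : ℂ) / ∏ u ∈ Finset.range (d+1), (a + u) := by
  intro d
  induction d with
  | zero => intro a h; simp
  | succ d ih =>
    intro a h
    have hsplit := Finset.sum_choose_succ_mul
      (fun i _ : ℕ => ((-1:ℂ))^i / (a + i)) d
    have hL : ∑ u ∈ Finset.range (d+2), ((-1:ℂ))^u * ((d+1).choose u) / (a + u)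
        = ∑ i ∈ Finset.range (d + 2), (((d + 1).choose i : ℂ)) * ((-1:ℂ)^i / (a + i)) := by
      refine Finset.sum_congr rfl fun u _ => by ring
    have hA : ∑ i ∈ Finset.range (d + 1), ((d.choose i : ℂ)) * ((-1:ℂ)^i / (a + i))
        = ∑ u ∈ Finset.range (d+1), ((-1:ℂ))^u * (d.choose u) / (a + u) :=
      Finset.sum_congr rfl fun u _ => by ring
    have hB : ∑ i ∈ Finset.range (d + 1), ((d.choose i : ℂ)) * ((-1:ℂ)^(i+1) / (a + (i+1 : ℕ)))
        = -∑ u ∈ Finset.range (d+1), ((-1:ℂ))^u * (d.choose u) / ((a+1) + u) := by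
      rw [← Finset.sum_neg_distrib]
      refine Finset.sum_congr rfl fun u _ => ?_
      push_cast
      ring
    have ha' : ∀ u ∈ Finset.range (d+1), a + u ≠ 0 := by
      intro u hu
      have hu' := Finset.mem_range.1 hu
      exact h u (Finset.mem_range.2 (by omega))
    have ha1 : ∀ u ∈ Finset.range (d+1), (a+1) + u ≠ 0 := by
      intro u hu
      have hu' := Finset.mem_range.1 hu
      have := h (u+1) (Finset.mem_range.2 (by omega))
      push_cast at this ⊢
      intro hc
      apply this
      linear_combination hc
    have hA0 : (∏ u ∈ Finset.range (d+1), (a + u)) ≠ 0 :=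
      Finset.prod_ne_zero_iff.2 ha'
    have hA1 : (∏ u ∈ Finset.range (d+1), ((a+1) + u)) ≠ 0 :=
      Finset.prod_ne_zero_iff.2 ha1
    have hP1 : ∏ u ∈ Finset.range (d+2), (a + u)
        = (∏ u ∈ Finset.range (d+1), (a + u)) * (a + (d+1 : ℕ)) := by
      rw [Finset.prod_range_succ]
    have hP2 : ∏ u ∈ Finset.range (d+2), (a + u)
        = a * ∏ u ∈ Finset.range (d+1), ((a+1) + u) := by
      rw [Finset.prod_range_succ']
      have h1 : ∀ x ∈ Finset.range (d+1), a + ((x+1 : ℕ) : ℂ) = (a+1) + x := by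
        intro x _
        push_cast
        ring
      rw [Finset.prod_congr rfl h1]
      push_cast
      ring
    have hrel : a * ∏ u ∈ Finset.range (d+1), ((a+1) + u)
        = (∏ u ∈ Finset.range (d+1), (a + u)) * (a + (d+1 : ℕ)) := by
      rw [← hP2, hP1]
    rw [hL, hsplit, hA, hB, ih a ha', ih (a+1) ha1, hP1]
    have ht : a + ((d+1 : ℕ) : ℂ) ≠ 0 := h (d+1) (Finset.mem_range.2 (by omega))
    have hfact : (((d+1).factorial : ℕ) : ℂ) = ((d:ℂ)+1) * (d.factorial : ℂ) := by
      rw [Nat.factorial_succ]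
      push_cast
      ring
    rw [← sub_eq_add_neg, div_sub_div _ _ hA0 hA1, hfact,
      div_eq_div_iff (mul_ne_zero hA0 hA1) (mul_ne_zero hA0 ht)]
    push_cast at hrel ⊢
    linear_combination ((d.factorial : ℂ) * (∏ u ∈ Finset.range (d+1), (a + u))) * hrel

lemma alt_sum_subset (Fs W : Finset σ) (hW : W ⊆ Fs) (hne : W ≠ Fs) :
    ∑ U ∈ Fs.powerset, ((-1:ℂ))^((Fs \ U).card) * (if W ⊆ U then 1 else 0) = 0 := by
  classical
  have key := Finset.prod_add (fun _ : σ => (1:ℂ))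
    (fun e : σ => if e ∈ W then 0 else -1) Fs
  have hterm : ∀ U ∈ Fs.powerset,
      (∏ _e ∈ U, (1:ℂ)) * ∏ e ∈ Fs \ U, (if e ∈ W then (0:ℂ) else -1)
      = ((-1:ℂ))^((Fs \ U).card) * (if W ⊆ U then 1 else 0) := by
    intro U hU
    rw [Finset.prod_const_one, one_mul]
    by_cases hWU : W ⊆ U
    · rw [if_pos hWU, mul_one]
      rw [Finset.prod_congr rfl (fun e he => ?_), Finset.prod_const]
      rw [if_neg]
      intro heW
      exact (Finset.mem_sdiff.1 he).2 (hWU heW)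
    · rw [if_neg hWU, mul_zero]
      obtain ⟨w, hwW, hwU⟩ := Finset.not_subset.1 hWU
      refine Finset.prod_eq_zero (Finset.mem_sdiff.2 ⟨hW hwW, hwU⟩) ?_
      rw [if_pos hwW]
  rw [← Finset.sum_congr rfl hterm, ← key]
  obtain ⟨e, heF, heW⟩ := Finset.exists_of_ssubset (Finset.ssubset_iff_subset_ne.2 ⟨hW, hne⟩)
  refine Finset.prod_eq_zero heF ?_
  rw [if_neg heW]
  ring


lemma prodIcc (τ K D t : ℕ) (hD : τ + D = K) (ht : t ≤ K) :
    ∏ k ∈ Finset.Icc τ K, ((t:ℂ) - k)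
      = (-1)^(D+1) * ((D+1).factorial : ℂ) * (((K-t).choose (D+1) : ℕ) : ℂ) := by
  by_cases htτ : τ ≤ t
  · have h1 : (t:ℕ) ∈ Finset.Icc τ K := Finset.mem_Icc.2 ⟨htτ, ht⟩
    rw [Finset.prod_eq_zero h1 (by ring)]
    have h2 : K - t < D + 1 := by omega
    rw [Nat.choose_eq_zero_of_lt h2]
    simp
  · push_neg at htτ
    have hcard : (Finset.Icc τ K).card = D + 1 := by
      rw [Nat.card_Icc]
      omega
    have hfac : ∀ k ∈ Finset.Icc τ K, ((t:ℂ) - k) = (-1) * (((k - t : ℕ) : ℕ) : ℂ) := by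
      intro k hk
      have hk' := Finset.mem_Icc.1 hk
      have : t ≤ k := by omega
      push_cast [Nat.cast_sub this]
      ring
    rw [Finset.prod_congr rfl hfac, Finset.prod_mul_distrib, Finset.prod_const, hcard]
    have hnat : ∏ k ∈ Finset.Icc τ K, (k - t : ℕ) = (K - t).descFactorial (D+1) := by
      rw [Nat.descFactorial_eq_prod_range]
      refine Finset.prod_bij (fun k _ => K - k) ?_ ?_ ?_ ?_
      · intro k hk
        have hk' := Finset.mem_Icc.1 hk
        beta_reduce
        exact Finset.mem_range.2 (by omega)
      · intro k1 h1 k2 h2 he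
        have h1' := Finset.mem_Icc.1 h1
        have h2' := Finset.mem_Icc.1 h2
        beta_reduce at he
        omega
      · intro j hj
        have hj' := Finset.mem_range.1 hj
        refine ⟨K - j, Finset.mem_Icc.2 (by omega), ?_⟩
        beta_reduce
        omega
      · intro k hk
        have hk' := Finset.mem_Icc.1 hk
        beta_reduce
        omega
    rw [← Nat.cast_prod, hnat, Nat.descFactorial_eq_factorial_mul_choose]
    push_cast
    ring


end Stmt15Aux

namespace Stmt15Aux
section Generic2
variable {σ : Type*} [Fintype σ] [DecidableEq σ]

lemma eval_aeval (x : σ → ℂ) (p : MvPolynomial σ ℂ) (W : Polynomial ℂ) :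
    eval x (Polynomial.aeval p W) = Polynomial.eval (eval x p) W := by
  rw [Polynomial.aeval_def, Polynomial.hom_eval₂]
  have hcomp : (MvPolynomial.eval x).comp (algebraMap ℂ (MvPolynomial σ ℂ)) = RingHom.id ℂ := by
    ext a
    simp
  rw [hcomp]
  rfl

lemma totalDegree_aeval_le (W : Polynomial ℂ) (p : MvPolynomial σ ℂ) (hp : p.totalDegree ≤ 1) :
    (Polynomial.aeval p W).totalDegree ≤ W.natDegree := by
  rw [Polynomial.aeval_eq_sum_range]
  apply le_trans (MvPolynomial.totalDegree_finset_sum _ _)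
  apply Finset.sup_le
  intro i hi
  have hi' := Finset.mem_range.1 hi
  calc (W.coeff i • p ^ i).totalDegree
      ≤ (p ^ i).totalDegree := MvPolynomial.totalDegree_smul_le _ _
    _ ≤ i * p.totalDegree := MvPolynomial.totalDegree_pow _ _
    _ ≤ i * 1 := Nat.mul_le_mul_left i hp
    _ ≤ W.natDegree := by omega

lemma tdeg_X_sub_one (e : σ) : ((X e - 1 : MvPolynomial σ ℂ)).totalDegree ≤ 1 := by
  rw [sub_eq_add_neg]
  apply le_trans (MvPolynomial.totalDegree_add _ _)
  apply max_le
  · rw [MvPolynomial.totalDegree_X]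
  · have h1 : (-1 : MvPolynomial σ ℂ) = C (-1) := by simp
    rw [h1, MvPolynomial.totalDegree_C]
    omega

lemma tdeg_neg_le (p : MvPolynomial σ ℂ) : (-p).totalDegree ≤ p.totalDegree := by
  have h1 : -p = C (-1) * p := by
    rw [map_neg, map_one]
    ring
  rw [h1]
  apply le_trans (MvPolynomial.totalDegree_mul _ _)
  rw [MvPolynomial.totalDegree_C]
  omega

lemma tdeg_sub_le (p q : MvPolynomial σ ℂ) :
    (p - q).totalDegree ≤ max p.totalDegree q.totalDegree := by
  rw [sub_eq_add_neg]
  apply le_trans (MvPolynomial.totalDegree_add _ _)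
  exact max_le_max le_rfl (tdeg_neg_le q)

lemma tdeg_pi_le (S : Finset σ) :
    ((∏ e ∈ S, (X e - 1) : MvPolynomial σ ℂ)).totalDegree ≤ S.card := by
  apply le_trans (MvPolynomial.totalDegree_finset_prod _ _)
  calc ∑ e ∈ S, ((X e - 1 : MvPolynomial σ ℂ)).totalDegree
      ≤ ∑ _e ∈ S, 1 := Finset.sum_le_sum (fun e _ => tdeg_X_sub_one e)
    _ = S.card := by rw [Finset.sum_const, smul_eq_mul, mul_one]

lemma eval_chi_pi (S T : Finset σ) :
    eval (chi T) ((∏ e ∈ S, (X e - 1) : MvPolynomial σ ℂ))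
      = if Disjoint S T then ((-1:ℂ))^S.card else 0 := by
  rw [map_prod]
  split_ifs with hdis
  · have hfac : ∀ e ∈ S, eval (chi T) ((X e - 1 : MvPolynomial σ ℂ)) = -1 := by
      intro e he
      rw [map_sub, eval_X, map_one]
      unfold chi
      rw [if_neg (Finset.disjoint_left.1 hdis he)]
      ring
    rw [Finset.prod_congr rfl hfac, Finset.prod_const]
  · rw [Finset.not_disjoint_iff] at hdis
    obtain ⟨e, heS, heT⟩ := hdis
    refine Finset.prod_eq_zero heS ?_
    rw [map_sub, eval_X, map_one]
    unfold chi
    rw [if_pos heT]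
    ring

lemma eval_chi_Psi (T : Finset σ) (j : ℕ) :
    eval (chi T) (∑ S ∈ Finset.powersetCard j Finset.univ, (∏ e ∈ S, (X e - 1)))
      = ((-1:ℂ))^j * (((Fintype.card σ - T.card).choose j : ℕ) : ℂ) := by
  rw [map_sum]
  have hterm : ∀ S ∈ Finset.powersetCard j Finset.univ,
      eval (chi T) ((∏ e ∈ S, (X e - 1) : MvPolynomial σ ℂ))
        = if Disjoint S T then ((-1:ℂ))^j else 0 := by
    intro S hS
    rw [eval_chi_pi, (Finset.mem_powersetCard.1 hS).2]
  rw [Finset.sum_congr rfl hterm, Finset.sum_ite, Finset.sum_const_zero, add_zero,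
    Finset.sum_const]
  have hfil : (Finset.powersetCard j Finset.univ).filter (fun S => Disjoint S T)
      = Finset.powersetCard j (Finset.univ \ T) := by
    ext S
    rw [Finset.mem_filter, Finset.mem_powersetCard, Finset.mem_powersetCard,
      Finset.subset_sdiff]
    constructor
    · rintro ⟨⟨h1, h2⟩, h3⟩
      exact ⟨⟨h1, h3⟩, h2⟩
    · rintro ⟨⟨h1, h3⟩, h2⟩
      exact ⟨⟨h1, h2⟩, h3⟩
  rw [hfil, Finset.card_powersetCard, Finset.card_sdiff_of_subset (Finset.subset_univ T),
    Finset.card_univ, nsmul_eq_mul]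
  ring

end Generic2
end Stmt15Aux

namespace Stmt15Aux
section Graph
variable {n : ℕ} (G : SimpleGraph (Fin n)) [DecidableRel G.Adj]

/-- cover predicate -/
def IsCover (S : Finset ↥G.edgeSet) : Prop :=
  ∀ v : Fin n, ∃ e ∈ S, v ∈ (e : Sym2 (Fin n))

/-- set of edges incident to a vertex -/
noncomputable def inc (i : Fin n) : Finset ↥G.edgeSet :=
  Finset.univ.filter (fun e : ↥G.edgeSet => i ∈ (e : Sym2 (Fin n)))

lemma ecVertexPoly_eq (i : Fin n) :
    ecVertexPoly G i = ∏ e ∈ inc G i, (X e - 1) := by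
  unfold ecVertexPoly
  refine Finset.prod_bij (fun j _ => incEdge G i j) ?_ ?_ ?_ ?_
  · intro j _
    beta_reduce
    unfold inc
    rw [Finset.mem_filter]
    refine ⟨Finset.mem_univ _, ?_⟩
    show i ∈ s(i, (j : Fin n))
    simp [Sym2.mem_iff]
  · intro j1 _ j2 _ he
    beta_reduce at he
    have hval : s(i, (j1 : Fin n)) = s(i, (j2 : Fin n)) := congrArg Subtype.val he
    exact Subtype.ext (Sym2.congr_right.1 hval)
  · intro e he
    unfold inc at he
    rw [Finset.mem_filter] at he
    obtain ⟨u, hu⟩ := Sym2.mem_iff_exists.1 he.2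
    have hadj : G.Adj i u := G.mem_edgeSet.1 (hu ▸ e.2)
    have humem : u ∈ G.neighborFinset i := (SimpleGraph.mem_neighborFinset G i u).2 hadj
    refine ⟨⟨u, humem⟩, Finset.mem_univ _, ?_⟩
    beta_reduce
    exact Subtype.ext (by exact hu.symm)
  · intro j _
    rfl

lemma eval_ecVertexPoly_zero (S : Finset ↥G.edgeSet) (i : Fin n)
    (h : ∃ e ∈ S, i ∈ (e : Sym2 (Fin n))) :
    eval (chi S) (ecVertexPoly G i) = 0 := by
  obtain ⟨e, heS, hie⟩ := h
  rw [ecVertexPoly_eq, map_prod]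
  refine Finset.prod_eq_zero (i := e) ?_ ?_
  · unfold inc
    rw [Finset.mem_filter]
    exact ⟨Finset.mem_univ _, hie⟩
  · rw [map_sub, eval_X, map_one]
    unfold chi
    rw [if_pos heS]
    ring

lemma eval_sumX (S : Finset ↥G.edgeSet) :
    eval (chi S) (∑ e : ↥G.edgeSet, X e) = (S.card : ℂ) := by
  rw [map_sum]
  simp only [eval_X]
  unfold chi
  rw [Finset.sum_boole]
  congr 1
  rw [Finset.filter_mem_eq_inter, Finset.univ_inter]

lemma isCover_superset {C D : Finset ↥G.edgeSet} (h : IsCover G C) (hCD : C ⊆ D) :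
    IsCover G D := by
  intro v
  obtain ⟨e, he, hv⟩ := h v
  exact ⟨e, hCD he, hv⟩

lemma isCover_univ (hiso : ∀ v : Fin n, ∃ u : Fin n, G.Adj v u) :
    IsCover G Finset.univ := by
  intro v
  obtain ⟨u, hu⟩ := hiso v
  refine ⟨⟨s(v, u), G.mem_edgeSet.2 hu⟩, Finset.mem_univ _, ?_⟩
  simp [Sym2.mem_iff]

lemma exists_min_cover (hiso : ∀ v : Fin n, ∃ u : Fin n, G.Adj v u) :
    ∃ C0 : Finset ↥G.edgeSet, IsCover G C0 ∧ ∀ C, IsCover G C → C0.card ≤ C.card := by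
  classical
  have hne : ((Finset.univ : Finset (Finset ↥G.edgeSet)).filter (fun S => IsCover G S)).Nonempty :=
    ⟨Finset.univ, Finset.mem_filter.2 ⟨Finset.mem_univ _, isCover_univ G hiso⟩⟩
  obtain ⟨C0, hC0, hmin⟩ := Finset.exists_min_image _ (fun S => S.card) hne
  rw [Finset.mem_filter] at hC0
  refine ⟨C0, hC0.2, fun C hC => hmin C (Finset.mem_filter.2 ⟨Finset.mem_univ _, hC⟩)⟩

lemma cover_exists_iff (C0 : Finset ↥G.edgeSet) (hC0 : IsCover G C0)
    (hmin : ∀ C, IsCover G C → C0.card ≤ C.card) (m : ℕ) :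
    (∃ E' : Finset ↥G.edgeSet, E'.card = m ∧ IsCover G E') ↔
      (C0.card ≤ m ∧ m ≤ Fintype.card ↥G.edgeSet) := by
  constructor
  · rintro ⟨E', hcard, hcov⟩
    exact ⟨hcard ▸ hmin E' hcov, hcard ▸ Finset.card_le_univ E'⟩
  · rintro ⟨h1, h2⟩
    obtain ⟨t, hsub, hcard⟩ := Finset.exists_superset_card_eq h1 h2
    exact ⟨t, hcard, isCover_superset G hC0 hsub⟩

lemma cageFreeNum_eq (C0 : Finset ↥G.edgeSet) (hC0 : IsCover G C0)
    (hmin : ∀ C, IsCover G C → C0.card ≤ C.card) :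
    cageFreeNum G = Fintype.card ↥G.edgeSet - C0.card := by
  unfold cageFreeNum
  have hset : {k : ℕ | ∃ E' : Finset ↥G.edgeSet,
      (∀ v : Fin n, ∃ e : ↥G.edgeSet, v ∈ (e : Sym2 (Fin n)) ∧ e ∉ E') ∧ E'.card = k}
      = Set.Iic (Fintype.card ↥G.edgeSet - C0.card) := by
    ext k
    constructor
    · rintro ⟨E', hfree, hcard⟩
      have hcov : IsCover G (Finset.univ \ E') := by
        intro v
        obtain ⟨e, hve, heE⟩ := hfree v
        exact ⟨e, Finset.mem_sdiff.2 ⟨Finset.mem_univ _, heE⟩, hve⟩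
      have h1 := hmin _ hcov
      have h2 : (Finset.univ \ E').card = Fintype.card ↥G.edgeSet - E'.card := by
        rw [Finset.card_sdiff_of_subset (Finset.subset_univ E')]
        rfl
      have h3 : E'.card ≤ Fintype.card ↥G.edgeSet := Finset.card_le_univ E'
      simp only [Set.mem_Iic]
      omega
    · intro hk
      simp only [Set.mem_Iic] at hk
      have h1 : C0.card ≤ Fintype.card ↥G.edgeSet := Finset.card_le_univ C0
      have h2 : k ≤ (Finset.univ \ C0).card := by
        rw [Finset.card_sdiff_of_subset (Finset.subset_univ C0)]
        have : (Finset.univ : Finset ↥G.edgeSet).card = Fintype.card ↥G.edgeSet := rfl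
        omega
      obtain ⟨E', hsub, hcard⟩ := Finset.exists_subset_card_eq h2
      refine ⟨E', ?_, hcard⟩
      intro v
      obtain ⟨e, heC0, hve⟩ := hC0 v
      refine ⟨e, hve, fun heE' => ?_⟩
      have := hsub heE'
      rw [Finset.mem_sdiff] at this
      exact this.2 heC0
  rw [hset, csSup_Iic]

lemma common_zero_iff (m : ℕ) :
    (∃ z : ↥G.edgeSet → ℂ,
        (∑ e : ↥G.edgeSet, z e) - (m : ℂ) = 0 ∧
        (∀ e : ↥G.edgeSet, z e ^ 2 - z e = 0) ∧
        (∀ i : Fin n, ∏ j : G.neighborFinset i, (z (incEdge G i j) - 1) = 0))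
      ↔ (∃ E' : Finset ↥G.edgeSet, E'.card = m ∧ IsCover G E') := by
  classical
  constructor
  · rintro ⟨z, h1, h2, h3⟩
    set E' := Finset.univ.filter (fun e : ↥G.edgeSet => z e = 1) with hE'
    have hz : ∀ e, z e = 0 ∨ z e = 1 := by
      intro e
      have h := h2 e
      have hfac : z e * (z e - 1) = 0 := by linear_combination h
      rcases mul_eq_zero.1 hfac with h' | h'
      · exact Or.inl h'
      · exact Or.inr (by linear_combination h')
    have hsum : (∑ e : ↥G.edgeSet, z e) = (E'.card : ℂ) := by
      rw [← Finset.sum_filter_add_sum_filter_not Finset.univ (fun e : ↥G.edgeSet => z e = 1)]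
      have hA : ∑ e ∈ Finset.univ.filter (fun e : ↥G.edgeSet => z e = 1), z e
          = (E'.card : ℂ) := by
        rw [Finset.sum_congr rfl (fun e he => (Finset.mem_filter.1 he).2)]
        rw [Finset.sum_const, hE', nsmul_eq_mul, mul_one]
      have hB : ∑ e ∈ Finset.univ.filter (fun e : ↥G.edgeSet => ¬ z e = 1), z e = 0 := by
        apply Finset.sum_eq_zero
        intro e he
        rcases hz e with h' | h'
        · exact h'
        · exact absurd h' (Finset.mem_filter.1 he).2
      rw [hA, hB, add_zero]
    have hm : E'.card = m := by
      have hc : (E'.card : ℂ) = (m : ℂ) := by linear_combination h1 - hsum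
      exact_mod_cast hc
    refine ⟨E', hm, ?_⟩
    intro v
    have hprod := h3 v
    obtain ⟨j, _, hj⟩ := Finset.prod_eq_zero_iff.1 hprod
    refine ⟨incEdge G v j, ?_, ?_⟩
    · rw [hE', Finset.mem_filter]
      exact ⟨Finset.mem_univ _, by linear_combination hj⟩
    · show v ∈ s(v, (j : Fin n))
      simp [Sym2.mem_iff]
  · rintro ⟨E', hcard, hcov⟩
    refine ⟨chi E', ?_, ?_, ?_⟩
    · rw [sum_chi, hcard, sub_self]
    · intro e
      unfold chi
      split_ifs <;> ring
    · intro i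
      obtain ⟨e, heE', hie⟩ := hcov i
      obtain ⟨u, hu⟩ := Sym2.mem_iff_exists.1 hie
      have hadj : G.Adj i u := G.mem_edgeSet.1 (hu ▸ e.2)
      have humem : u ∈ G.neighborFinset i := (SimpleGraph.mem_neighborFinset G i u).2 hadj
      refine Finset.prod_eq_zero
        (Finset.mem_univ (⟨u, humem⟩ : ↥(G.neighborFinset i))) ?_
      have hinc : incEdge G i ⟨u, humem⟩ = e := Subtype.ext (by exact hu.symm)
      rw [hinc]
      unfold chi
      rw [if_pos heE']
      ring

lemma lower_bound (m : ℕ) (C0 : Finset ↥G.edgeSet) (hC0 : IsCover G C0)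
    (hm : m < C0.card ∨ Fintype.card ↥G.edgeSet < m)
    (A : MvPolynomial ↥G.edgeSet ℂ)
    (P : ↥G.edgeSet → MvPolynomial ↥G.edgeSet ℂ)
    (R : Fin n → MvPolynomial ↥G.edgeSet ℂ)
    (hid : A * ((∑ e : ↥G.edgeSet, X e) - (m : MvPolynomial ↥G.edgeSet ℂ)) +
            (∑ e : ↥G.edgeSet, P e * ((X e) ^ 2 - X e)) +
            (∑ i : Fin n, R i * ecVertexPoly G i) = 1) :
    Fintype.card ↥G.edgeSet - C0.card ≤ A.totalDegree := by
  classical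
  set K := Fintype.card ↥G.edgeSet with hK
  set τ := C0.card with hτ
  set d := K - τ with hd
  have hτK : τ ≤ K := (Finset.card_le_univ C0).trans_eq (Finset.card_univ)
  by_contra hcon
  push_neg at hcon
  set Fs := (Finset.univ : Finset ↥G.edgeSet) \ C0 with hFs
  have hFscard : Fs.card = d := by
    rw [hFs, Finset.card_sdiff_of_subset (Finset.subset_univ C0), Finset.card_univ]
  -- the sum-target is never attained on cover cardinalities
  have hneN : ∀ U : Finset ↥G.edgeSet, U ∈ Fs.powerset → τ + U.card ≠ m := by
    intro U hU
    have hUsub := Finset.mem_powerset.1 hU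
    have hUcard : U.card ≤ d := hFscard ▸ Finset.card_le_card hUsub
    omega
  have hneC : ∀ U : Finset ↥G.edgeSet, U ∈ Fs.powerset →
      ((τ:ℂ) + (U.card:ℂ) - (m:ℂ)) ≠ 0 := by
    intro U hU hz
    have h1 : ((τ + U.card : ℕ):ℂ) = (m:ℂ) := by push_cast; linear_combination hz
    exact hneN U hU (Nat.cast_inj.1 h1)
  -- evaluation of the certificate at cover points
  have hpoint : ∀ U : Finset ↥G.edgeSet, U ∈ Fs.powerset →
      (eval (chi (C0 ∪ U)) A) * ((τ:ℂ) + (U.card:ℂ) - (m:ℂ)) = 1 := by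
    intro U hU
    have hUsub := Finset.mem_powerset.1 hU
    have hdisj : Disjoint C0 U := by
      rw [Finset.disjoint_left]
      intro a haC0 haU
      exact (Finset.mem_sdiff.1 (hUsub haU)).2 haC0
    have hcardU : (C0 ∪ U).card = τ + U.card := by
      rw [Finset.card_union_of_disjoint hdisj]
    have hcov : IsCover G (C0 ∪ U) := isCover_superset G hC0 Finset.subset_union_left
    have hev := congrArg (eval (chi (C0 ∪ U))) hid
    rw [map_add, map_add, map_mul, map_sub, eval_sumX, map_one, map_sum, map_sum] at hev
    have hbool : ∀ e ∈ (Finset.univ : Finset ↥G.edgeSet),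
        eval (chi (C0 ∪ U)) (P e * ((X e) ^ 2 - X e)) = 0 := by
      intro e _
      rw [map_mul, eval_chi_bool, mul_zero]
    have hvert : ∀ i ∈ (Finset.univ : Finset (Fin n)),
        eval (chi (C0 ∪ U)) (R i * ecVertexPoly G i) = 0 := by
      intro i _
      rw [map_mul, eval_ecVertexPoly_zero G _ i (hcov i), mul_zero]
    rw [Finset.sum_eq_zero hbool, Finset.sum_eq_zero hvert, add_zero, add_zero] at hev
    rw [map_natCast, hcardU] at hev
    push_cast at hev
    linear_combination hev
  -- the alternating-weighted sum of A-evaluations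
  have hkey : ∑ U ∈ Fs.powerset, ((-1:ℂ))^((Fs \ U).card) / ((τ:ℂ) + (U.card:ℂ) - (m:ℂ))
      = ∑ U ∈ Fs.powerset, ((-1:ℂ))^((Fs \ U).card) * eval (chi (C0 ∪ U)) A := by
    refine Finset.sum_congr rfl fun U hU => ?_
    rw [div_eq_iff (hneC U hU)]
    linear_combination (-((-1:ℂ))^((Fs \ U).card)) * hpoint U hU
  -- RHS is zero since A has low degree
  have hRHS : ∑ U ∈ Fs.powerset, ((-1:ℂ))^((Fs \ U).card) * eval (chi (C0 ∪ U)) A = 0 := by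
    have hA : ∀ U : Finset ↥G.edgeSet, eval (chi (C0 ∪ U)) A
        = ∑ α ∈ A.support, (if α.support ⊆ C0 ∪ U then coeff α A else 0) := by
      intro U
      conv_lhs => rw [MvPolynomial.as_sum A]
      rw [map_sum]
      exact Finset.sum_congr rfl fun α _ => eval_chi_monomial _ α _
    calc ∑ U ∈ Fs.powerset, ((-1:ℂ))^((Fs \ U).card) * eval (chi (C0 ∪ U)) A
        = ∑ U ∈ Fs.powerset, ∑ α ∈ A.support,
            coeff α A * (((-1:ℂ))^((Fs \ U).card) * (if α.support \ C0 ⊆ U then 1 else 0)) := by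
          refine Finset.sum_congr rfl fun U hU => ?_
          rw [hA U, Finset.mul_sum]
          refine Finset.sum_congr rfl fun α _ => ?_
          have hiff : (α.support ⊆ C0 ∪ U) ↔ (α.support \ C0 ⊆ U) := by
            constructor
            · intro h' x hx
              rw [Finset.mem_sdiff] at hx
              rcases Finset.mem_union.1 (h' hx.1) with h'' | h''
              · exact absurd h'' hx.2
              · exact h''
            · intro h' x hx
              by_cases hxC : x ∈ C0
              · exact Finset.mem_union.2 (Or.inl hxC)
              · exact Finset.mem_union.2 (Or.inr (h' (Finset.mem_sdiff.2 ⟨hx, hxC⟩)))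
          by_cases hc : α.support \ C0 ⊆ U
          · rw [if_pos hc, if_pos (hiff.2 hc)]
            ring
          · rw [if_neg hc, if_neg (fun h => hc (hiff.1 h))]
            ring
      _ = ∑ α ∈ A.support, coeff α A * ∑ U ∈ Fs.powerset,
            (((-1:ℂ))^((Fs \ U).card) * (if α.support \ C0 ⊆ U then 1 else 0)) := by
          rw [Finset.sum_comm]
          exact Finset.sum_congr rfl fun α _ => (Finset.mul_sum _ _ _).symm
      _ = 0 := by
          apply Finset.sum_eq_zero
          intro α hα
          rw [alt_sum_subset Fs (α.support \ C0) ?_ ?_, mul_zero]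
          · rw [hFs]
            exact Finset.sdiff_subset_sdiff (Finset.subset_univ _) (le_refl C0)
          · intro hWF
            have h1 : (α.support \ C0).card ≤ α.support.card :=
              Finset.card_le_card (Finset.sdiff_subset)
            have h2 : α.support.card ≤ fdeg α := card_support_le_fdeg α
            have h3 : fdeg α ≤ A.totalDegree := fdeg_le_totalDegree hα
            have h4 : (α.support \ C0).card = d := by rw [hWF, hFscard]
            omega
  -- LHS is nonzero via the rational-sum identity
  have hLHS : ∑ U ∈ Fs.powerset, ((-1:ℂ))^((Fs \ U).card) / ((τ:ℂ) + (U.card:ℂ) - (m:ℂ)) ≠ 0 := by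
    set a : ℂ := (τ:ℂ) - (m:ℂ) with ha
    have haU : ∀ u ∈ Finset.range (d+1), a + (u:ℂ) ≠ 0 := by
      intro u hu hz
      have hu' := Finset.mem_range.1 hu
      have h1 : ((τ + u : ℕ):ℂ) = (m:ℂ) := by push_cast; linear_combination hz
      have := Nat.cast_inj.1 h1
      omega
    have hgrp : ∑ U ∈ Fs.powerset, ((-1:ℂ))^((Fs \ U).card) / ((τ:ℂ) + (U.card:ℂ) - (m:ℂ))
        = ∑ j ∈ Finset.range (d+1), (d.choose j : ℂ) * (((-1:ℂ))^(d-j) / (a + (j:ℂ))) := by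
      rw [Finset.sum_powerset]
      rw [hFscard]
      refine Finset.sum_congr rfl fun j hj => ?_
      have hinner : ∀ U ∈ Finset.powersetCard j Fs,
          ((-1:ℂ))^((Fs \ U).card) / ((τ:ℂ) + (U.card:ℂ) - (m:ℂ))
          = ((-1:ℂ))^(d-j) / (a + (j:ℂ)) := by
        intro U hU
        obtain ⟨hUsub, hUcard⟩ := Finset.mem_powersetCard.1 hU
        rw [Finset.card_sdiff_of_subset hUsub, hFscard, hUcard, ha]
        ring_nf
      rw [Finset.sum_congr rfl hinner, Finset.sum_const, Finset.card_powersetCard, hFscard,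
        nsmul_eq_mul]
    have hsign : ∀ j ∈ Finset.range (d+1), (d.choose j : ℂ) * (((-1:ℂ))^(d-j) / (a + (j:ℂ)))
        = ((-1:ℂ))^d * (((-1:ℂ))^j * (d.choose j : ℂ) / (a + (j:ℂ))) := by
      intro j hj
      have hj' := Finset.mem_range.1 hj
      have hpow : ((-1:ℂ))^(d-j) * ((-1:ℂ))^j = ((-1:ℂ))^d := by
        rw [← pow_add]
        congr 1
        omega
      have hsq : ((-1:ℂ))^j * ((-1:ℂ))^j = 1 := by
        rw [← pow_add, ← two_mul, pow_mul]
        norm_num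
      have hpows : ((-1:ℂ))^(d-j) = ((-1:ℂ))^d * ((-1:ℂ))^j := by
        calc ((-1:ℂ))^(d-j) = ((-1:ℂ))^(d-j) * (((-1:ℂ))^j * ((-1:ℂ))^j) := by
              rw [hsq, mul_one]
        _ = (((-1:ℂ))^(d-j) * ((-1:ℂ))^j) * ((-1:ℂ))^j := by ring
        _ = ((-1:ℂ))^d * ((-1:ℂ))^j := by rw [hpow]
      rw [hpows]
      ring
    rw [hgrp, Finset.sum_congr rfl hsign, ← Finset.mul_sum, ratsum d a haU]
    apply mul_ne_zero
    · exact pow_ne_zero _ (by norm_num)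
    apply div_ne_zero
    · exact Nat.cast_ne_zero.2 (Nat.factorial_ne_zero d)
    · exact Finset.prod_ne_zero_iff.2 haU
  rw [hkey] at hLHS
  exact hLHS hRHS

lemma upper_bound (hiso : ∀ v : Fin n, ∃ u : Fin n, G.Adj v u) (m : ℕ)
    (C0 : Finset ↥G.edgeSet) (_hC0 : IsCover G C0)
    (hmin : ∀ C, IsCover G C → C0.card ≤ C.card)
    (hm : m < C0.card ∨ Fintype.card ↥G.edgeSet < m) :
    ∃ (A : MvPolynomial ↥G.edgeSet ℂ)
      (P : ↥G.edgeSet → MvPolynomial ↥G.edgeSet ℂ)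
      (R : Fin n → MvPolynomial ↥G.edgeSet ℂ),
      A * ((∑ e : ↥G.edgeSet, X e) - (m : MvPolynomial ↥G.edgeSet ℂ)) +
          (∑ e : ↥G.edgeSet, P e * ((X e) ^ 2 - X e)) +
          (∑ i : Fin n, R i * ecVertexPoly G i) = 1 ∧
      A.totalDegree ≤ Fintype.card ↥G.edgeSet - C0.card ∧
      (∀ e, (P e).totalDegree ≤ Fintype.card ↥G.edgeSet - C0.card) ∧
      (∀ i, (R i).totalDegree ≤ Fintype.card ↥G.edgeSet - C0.card) := by
  classical
  set K := Fintype.card ↥G.edgeSet with hK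
  set τ := C0.card with hτ
  set D := K - τ with hDdef
  have hτK : τ ≤ K := (Finset.card_le_univ C0).trans_eq Finset.card_univ
  have hDK : τ + D = K := by omega
  -- univariate preparations
  set f : Polynomial ℂ := ∏ k ∈ Finset.Icc τ K, (Polynomial.X - Polynomial.C (k:ℂ)) with hf
  have hfm : f.eval (m:ℂ) ≠ 0 := by
    rw [hf, Polynomial.eval_prod]
    apply Finset.prod_ne_zero_iff.2
    intro k hk
    have hk' := Finset.mem_Icc.1 hk
    rw [Polynomial.eval_sub, Polynomial.eval_X, Polynomial.eval_C, sub_ne_zero]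
    intro hcast
    have := Nat.cast_inj.1 hcast
    omega
  set c : ℂ := - (f.eval (m:ℂ))⁻¹ with hc
  have hcne : c ≠ 0 := by
    rw [hc, neg_ne_zero]
    exact inv_ne_zero hfm
  set g : Polynomial ℂ := 1 + Polynomial.C c * f with hg
  have hgroot : g.IsRoot (m:ℂ) := by
    rw [Polynomial.IsRoot, hg, Polynomial.eval_add, Polynomial.eval_one,
      Polynomial.eval_mul, Polynomial.eval_C, hc]
    field_simp
    ring
  obtain ⟨q, hq⟩ := (Polynomial.dvd_iff_isRoot).2 hgroot
  have hfdeg : f.natDegree = D + 1 := by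
    have hnd := Polynomial.natDegree_prod (Finset.Icc τ K)
      (fun k : ℕ => Polynomial.X - Polynomial.C (k:ℂ))
      (fun k _ => Polynomial.X_sub_C_ne_zero (k:ℂ))
    have hsum : ∑ i ∈ Finset.Icc τ K, (Polynomial.X - Polynomial.C (i:ℂ)).natDegree = D + 1 := by
      rw [Finset.sum_congr rfl (fun (k:ℕ) _ => Polynomial.natDegree_X_sub_C (k:ℂ)),
        Finset.sum_const, smul_eq_mul, mul_one, Nat.card_Icc]
      omega
    rw [hf, hnd]
    beta_reduce
    exact hsum
  have hgdeg : g.natDegree = D + 1 := by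
    have h1 : (Polynomial.C c * f).natDegree = D + 1 := by
      rw [Polynomial.natDegree_C_mul hcne, hfdeg]
    have h2 : (1 : Polynomial ℂ) = Polynomial.C 1 := by simp
    rw [hg, add_comm, h2, Polynomial.natDegree_add_C, h1]
  have hqne : q ≠ 0 := by
    intro h0
    rw [h0, mul_zero] at hq
    rw [hq] at hgdeg
    simp at hgdeg
  have hqdeg : q.natDegree = D := by
    have := hgdeg
    rw [hq, Polynomial.natDegree_mul (Polynomial.X_sub_C_ne_zero _) hqne,
      Polynomial.natDegree_X_sub_C] at this
    omega
  -- multivariate side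
  set s : MvPolynomial ↥G.edgeSet ℂ := ∑ e : ↥G.edgeSet, X e with hs
  have hs1 : s.totalDegree ≤ 1 := by
    rw [hs]
    apply le_trans (MvPolynomial.totalDegree_finset_sum _ _)
    apply Finset.sup_le
    intro e _
    rw [MvPolynomial.totalDegree_X]
  set A : MvPolynomial ↥G.edgeSet ℂ := Polynomial.aeval s q with hA
  set Φ : MvPolynomial ↥G.edgeSet ℂ := Polynomial.aeval s f with hΦdef
  have hAdeg : A.totalDegree ≤ D := by
    rw [hA]
    exact le_trans (totalDegree_aeval_le q s hs1) (le_of_eq hqdeg)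
  have hAid : A * (s - (m : MvPolynomial ↥G.edgeSet ℂ)) = 1 + C c * Φ := by
    have hev := congrArg (Polynomial.aeval s) hq
    rw [map_add, map_one, map_mul, map_mul, map_sub, Polynomial.aeval_X,
      Polynomial.aeval_C, Polynomial.aeval_C] at hev
    rw [MvPolynomial.algebraMap_eq, ← hA, ← hΦdef] at hev
    have hmC : ((m : ℕ) : MvPolynomial ↥G.edgeSet ℂ) = C ((m:ℕ) : ℂ) :=
      (map_natCast (C : ℂ →+* MvPolynomial ↥G.edgeSet ℂ) m).symm
    rw [hmC]
    linear_combination -hev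
  set N : ℂ := (((D+1).factorial : ℕ) : ℂ) with hN
  set Ψ : MvPolynomial ↥G.edgeSet ℂ :=
    ∑ S ∈ Finset.powersetCard (D+1) (Finset.univ : Finset ↥G.edgeSet),
      ∏ e ∈ S, (X e - 1) with hΨdef
  set q0 : MvPolynomial ↥G.edgeSet ℂ := Φ - C N * Ψ with hq0def
  have hvan : ∀ T : Finset ↥G.edgeSet, eval (chi T) q0 = 0 := by
    intro T
    rw [hq0def, map_sub, map_mul, MvPolynomial.eval_C]
    have hTK : T.card ≤ K := (Finset.card_le_univ T).trans_eq Finset.card_univ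
    have hΦev : eval (chi T) Φ
        = (-1)^(D+1) * ((((D+1).factorial : ℕ)) : ℂ) * (((K - T.card).choose (D+1) : ℕ) : ℂ) := by
      rw [hΦdef, eval_aeval, eval_sumX, hf, Polynomial.eval_prod]
      rw [← prodIcc τ K D T.card hDK hTK]
      refine Finset.prod_congr rfl fun k _ => ?_
      rw [Polynomial.eval_sub, Polynomial.eval_X, Polynomial.eval_C]
    have hΨev : eval (chi T) Ψ
        = ((-1:ℂ))^(D+1) * (((K - T.card).choose (D+1) : ℕ) : ℂ) := by
      rw [hΨdef, eval_chi_Psi T (D+1)]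
    rw [hΦev, hΨev, hN]
    ring
  obtain ⟨P0, hq0id, hP0deg⟩ := div_of_vanish q0 hvan
  have hΨdeg : Ψ.totalDegree ≤ D + 1 := by
    rw [hΨdef]
    apply le_trans (MvPolynomial.totalDegree_finset_sum _ _)
    apply Finset.sup_le
    intro S hS
    exact le_trans (tdeg_pi_le S) (le_of_eq (Finset.mem_powersetCard.1 hS).2)
  have hq0deg : q0.totalDegree ≤ D + 1 := by
    rw [hq0def]
    apply le_trans (tdeg_sub_le _ _)
    apply max_le
    · exact le_trans (totalDegree_aeval_le f s hs1) (le_of_eq hfdeg)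
    · apply le_trans (MvPolynomial.totalDegree_mul _ _)
      rw [MvPolynomial.totalDegree_C]
      omega
  -- choice of caged vertex for each large edge-subset
  have hvchS : ∀ S ∈ Finset.powersetCard (D+1) (Finset.univ : Finset ↥G.edgeSet),
      ∃ v : Fin n, inc G v ⊆ S := by
    intro S hS
    obtain ⟨hSsub, hScard⟩ := Finset.mem_powersetCard.1 hS
    have hτpos : 1 ≤ τ := by
      by_contra hcon
      have hKD : K < D + 1 := by omega
      have : Finset.powersetCard (D+1) (Finset.univ : Finset ↥G.edgeSet) = ∅ :=
        Finset.powersetCard_eq_empty.2 (by rw [Finset.card_univ]; omega)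
      rw [this] at hS
      simp at hS
    have hnc : ¬ IsCover G (Finset.univ \ S) := by
      intro hcov
      have h1 := hmin _ hcov
      have h2 : (Finset.univ \ S).card = K - (D+1) := by
        rw [Finset.card_sdiff_of_subset (Finset.subset_univ S), Finset.card_univ, hScard]
      omega
    unfold IsCover at hnc
    push_neg at hnc
    obtain ⟨v, hv⟩ := hnc
    refine ⟨v, fun e he => ?_⟩
    unfold inc at he
    rw [Finset.mem_filter] at he
    by_contra heS
    exact hv e (Finset.mem_sdiff.2 ⟨Finset.mem_univ _, heS⟩) he.2
  set vch : Finset ↥G.edgeSet → Option (Fin n) :=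
    fun S => if h : ∃ v : Fin n, inc G v ⊆ S then some h.choose else none with hvch
  set Ψi : Fin n → MvPolynomial ↥G.edgeSet ℂ := fun i =>
    ∑ S ∈ (Finset.powersetCard (D+1) (Finset.univ : Finset ↥G.edgeSet)).filter
        (fun S => vch S = some i),
      ∏ e ∈ S \ inc G i, (X e - 1) with hΨi
  have hincS : ∀ (i : Fin n) (S : Finset ↥G.edgeSet),
      S ∈ Finset.powersetCard (D+1) (Finset.univ : Finset ↥G.edgeSet) →
      vch S = some i → inc G i ⊆ S := by
    intro i S hSA hvchi
    have h := hvchS S hSA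
    rw [hvch] at hvchi
    simp only [dif_pos h] at hvchi
    have := h.choose_spec
    rwa [Option.some.inj hvchi] at this
  have hΨdecomp : Ψ = ∑ i : Fin n, Ψi i * ecVertexPoly G i := by
    rw [hΨdef, ← Finset.sum_fiberwise_of_maps_to
      (g := vch) (t := (Finset.univ : Finset (Option (Fin n))))
      (fun S _ => Finset.mem_univ _) (fun S => ∏ e ∈ S, (X e - 1))]
    rw [Fintype.sum_option]
    have hnone : ∑ S ∈ (Finset.powersetCard (D+1)
          (Finset.univ : Finset ↥G.edgeSet)).filter (fun S => vch S = none),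
        (∏ e ∈ S, (X e - 1) : MvPolynomial ↥G.edgeSet ℂ) = 0 := by
      apply Finset.sum_eq_zero
      intro S hS
      rw [Finset.mem_filter] at hS
      have h := hvchS S hS.1
      rw [hvch] at hS
      simp only [dif_pos h] at hS
      exact absurd hS.2 (by simp)
    rw [hnone, zero_add]
    refine Finset.sum_congr rfl fun i _ => ?_
    rw [hΨi, ecVertexPoly_eq, Finset.sum_mul]
    refine Finset.sum_congr rfl fun S hS => ?_
    rw [Finset.mem_filter] at hS
    have hinc := hincS i S hS.1 hS.2
    beta_reduce
    rw [Finset.prod_sdiff hinc]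
  have hΨideg : ∀ i, (Ψi i).totalDegree ≤ D := by
    intro i
    rw [hΨi]
    beta_reduce
    apply le_trans (MvPolynomial.totalDegree_finset_sum _ _)
    apply Finset.sup_le
    intro S hS
    rw [Finset.mem_filter] at hS
    have hinc := hincS i S hS.1 hS.2
    apply le_trans (tdeg_pi_le _)
    have hcard : (S \ inc G i).card = (D+1) - (inc G i).card := by
      rw [Finset.card_sdiff_of_subset hinc, (Finset.mem_powersetCard.1 hS.1).2]
    have hincne : 1 ≤ (inc G i).card := by
      obtain ⟨u, hu⟩ := hiso i
      have : (⟨s(i, u), G.mem_edgeSet.2 hu⟩ : ↥G.edgeSet) ∈ inc G i := by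
        unfold inc
        rw [Finset.mem_filter]
        exact ⟨Finset.mem_univ _, by simp [Sym2.mem_iff]⟩
      exact Finset.card_pos.2 ⟨_, this⟩
    omega
  -- assemble the certificate
  refine ⟨A, fun e => -(C c) * P0 e, fun i => -(C (c * N)) * Ψi i, ?_, hAdeg, ?_, ?_⟩
  · have hPsum : ∑ e : ↥G.edgeSet, (-(C c) * P0 e) * ((X e) ^ 2 - X e)
        = -(C c) * ∑ e : ↥G.edgeSet, P0 e * ((X e) ^ 2 - X e) := by
      rw [Finset.mul_sum]
      exact Finset.sum_congr rfl fun e _ => by ring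
    have hRsum : ∑ i : Fin n, (-(C (c * N)) * Ψi i) * ecVertexPoly G i
        = -(C (c * N)) * ∑ i : Fin n, Ψi i * ecVertexPoly G i := by
      rw [Finset.mul_sum]
      exact Finset.sum_congr rfl fun i _ => by ring
    have hCN : (C (c * N) : MvPolynomial ↥G.edgeSet ℂ) = C c * C N := map_mul C c N
    rw [hPsum, hRsum, ← hΨdecomp, ← hq0id, hAid, hCN, hq0def]
    ring
  · intro e
    beta_reduce
    by_cases h0 : P0 e = 0
    · rw [h0, mul_zero]
      simp
    · apply le_trans (MvPolynomial.totalDegree_mul _ _)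
      have hnegC : (-(C c) : MvPolynomial ↥G.edgeSet ℂ) = C (-c) := (map_neg C c).symm
      rw [hnegC, MvPolynomial.totalDegree_C]
      rcases hP0deg e with h | h
      · exact absurd h h0
      · omega
  · intro i
    beta_reduce
    apply le_trans (MvPolynomial.totalDegree_mul _ _)
    have hnegC : (-(C (c * N)) : MvPolynomial ↥G.edgeSet ℂ) = C (-(c * N)) :=
      (map_neg C (c * N)).symm
    rw [hnegC, MvPolynomial.totalDegree_C]
    have := hΨideg i
    omega

end Graph
end Stmt15Aux



open Stmt15Aux


/-- For `G` with no isolated vertices, the system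
`(∑ x_e) − m`, `x_e² − x_e`, `∏_{j∈N(i)}(x_{ij} − 1)` has a common zero over
`ℂ` iff `G` has an edge cover of size `m`; and if it has no common zero, the
minimum degree of a Nullstellensatz certificate equals the maximum number of
edges of a subgraph of `G` that cages no vertex of `G`. -/
theorem stmt15 (n : ℕ) (G : SimpleGraph (Fin n)) [DecidableRel G.Adj]
    (hiso : ∀ v : Fin n, ∃ u : Fin n, G.Adj v u) (m : ℕ) :
    ((∃ z : ↥G.edgeSet → ℂ,
        (∑ e : ↥G.edgeSet, z e) - (m : ℂ) = 0 ∧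
        (∀ e : ↥G.edgeSet, z e ^ 2 - z e = 0) ∧
        (∀ i : Fin n, ∏ j : G.neighborFinset i, (z (incEdge G i j) - 1) = 0))
      ↔
      (∃ E' : Finset ↥G.edgeSet, E'.card = m ∧
        ∀ v : Fin n, ∃ e ∈ E', v ∈ (e : Sym2 (Fin n)))) ∧
    (¬ (∃ z : ↥G.edgeSet → ℂ,
        (∑ e : ↥G.edgeSet, z e) - (m : ℂ) = 0 ∧
        (∀ e : ↥G.edgeSet, z e ^ 2 - z e = 0) ∧
        (∀ i : Fin n, ∏ j : G.neighborFinset i, (z (incEdge G i j) - 1) = 0)) →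
      (∃ (A : MvPolynomial ↥G.edgeSet ℂ)
          (P : ↥G.edgeSet → MvPolynomial ↥G.edgeSet ℂ)
          (R : Fin n → MvPolynomial ↥G.edgeSet ℂ),
        A * ((∑ e : ↥G.edgeSet, X e) - (m : MvPolynomial ↥G.edgeSet ℂ)) +
            (∑ e : ↥G.edgeSet, P e * ((X e) ^ 2 - X e)) +
            (∑ i : Fin n, R i * ecVertexPoly G i) = 1 ∧
        max A.totalDegree
            (max (Finset.univ.sup fun e : ↥G.edgeSet => (P e).totalDegree)
              (Finset.univ.sup fun i : Fin n => (R i).totalDegree)) =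
          cageFreeNum G) ∧
      (∀ (A : MvPolynomial ↥G.edgeSet ℂ)
          (P : ↥G.edgeSet → MvPolynomial ↥G.edgeSet ℂ)
          (R : Fin n → MvPolynomial ↥G.edgeSet ℂ),
        A * ((∑ e : ↥G.edgeSet, X e) - (m : MvPolynomial ↥G.edgeSet ℂ)) +
            (∑ e : ↥G.edgeSet, P e * ((X e) ^ 2 - X e)) +
            (∑ i : Fin n, R i * ecVertexPoly G i) = 1 →
        cageFreeNum G ≤
          max A.totalDegree
            (max (Finset.univ.sup fun e : ↥G.edgeSet => (P e).totalDegree)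
              (Finset.univ.sup fun i : Fin n => (R i).totalDegree)))) := by
    classical
  obtain ⟨C0, hC0, hmin⟩ := exists_min_cover G hiso
  have hiff : (∃ z : ↥G.edgeSet → ℂ,
        (∑ e : ↥G.edgeSet, z e) - (m : ℂ) = 0 ∧
        (∀ e : ↥G.edgeSet, z e ^ 2 - z e = 0) ∧
        (∀ i : Fin n, ∏ j : G.neighborFinset i, (z (incEdge G i j) - 1) = 0))
      ↔ (∃ E' : Finset ↥G.edgeSet, E'.card = m ∧ IsCover G E') := common_zero_iff G m
  constructor
  · exact hiff
  · intro hinfeas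
    have hnex : ¬ ∃ E' : Finset ↥G.edgeSet, E'.card = m ∧ IsCover G E' :=
      fun h => hinfeas (hiff.2 h)
    have hm : m < C0.card ∨ Fintype.card ↥G.edgeSet < m := by
      by_contra hcon
      push_neg at hcon
      exact hnex ((cover_exists_iff G C0 hC0 hmin m).2 ⟨by omega, by omega⟩)
    have hcfn : cageFreeNum G = Fintype.card ↥G.edgeSet - C0.card :=
      cageFreeNum_eq G C0 hC0 hmin
    constructor
    · obtain ⟨A, P, R, hid, hAdeg, hPdeg, hRdeg⟩ := upper_bound G hiso m C0 hC0 hmin hm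
      refine ⟨A, P, R, hid, ?_⟩
      apply le_antisymm
      · rw [hcfn]
        apply max_le hAdeg
        apply max_le
        · exact Finset.sup_le fun e _ => hPdeg e
        · exact Finset.sup_le fun i _ => hRdeg i
      · rw [hcfn]
        exact le_trans (lower_bound G m C0 hC0 hm A P R hid) (le_max_left _ _)
    · intro A P R hid
      rw [hcfn]
      exact le_trans (lower_bound G m C0 hC0 hm A P R hid) (le_max_left _ _)
end

section
/- Let G be a finite simple graph with no perfect matching, and let ν(G) be the maximum cardinality of a matching of G. Then there exist polynomials Δ_v (one for each vertex v) and Θ_{e,e'} (one for each pair of distinct edges e, e' sharing a vertex) with ∑_{v∈V(G)} Δ_v·((∑_{e∋v} x_e) − 1) + ∑_{e,e'} Θ_{e,e'}·x_e x_{e'} = 1, such that: (a) deg(Δ_v) = ν(G) for every vertex v; (b) for every matching M of G (including the empty matching), the monomial ∏_{e∈M} x_e appears with nonzero coefficient in Δ_v for every vertex v; and (c) deg(Θ_{e,e'}) ≤ ν(G) for all pairs of distinct adjacent edges e, e'. -/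
/-!
Write `x^M = ∏_{e ∈ M} x_e` and take `Δ_v = ∑_M c(v, M) x^M` over all matchings `M`, where
`c(v, M) = ±1` if `v` is an endpoint of an edge of `M` (opposite signs at its two ends) and
`c(v, M) = a_{|M|}` if `M` misses `v`. In `∑_v Δ_v ((∑_{e ∋ v} x_e) − 1)` the monomial `x^M x_e`
gets the coefficient `∑_{v ∈ e} c(v, M)`. This vanishes for `e ∈ M`; if `e ∉ M` meets an edge `e'`
of `M`, the term is a multiple `x^{M ∖ e'} · x_e x_{e'}` and goes into `Θ_{e,e'}`; otherwise it is
`2 a_{|M|} x^{M ∪ e}`. Collecting, `x^M` is left with `2|M| a_{|M|-1} − (|V| − 2|M|) a_{|M|}`, and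
the recursion `a_0 = −1/|V|`, `(|V| − 2k) a_k = 2k a_{k−1}` makes this `1` for `M = ∅` and `0`
otherwise. Without a perfect matching `2|M| < |V|`, so the `a_k` that occur are defined and nonzero.
-/

open MvPolynomial Finset

/-- The perfect-matching vertex polynomial `(∑_{e ∋ v} x_e) − 1`. -/
noncomputable def pmVertexPoly {V : Type*} [Fintype V] [DecidableEq V]
    (G : SimpleGraph V) [DecidableRel G.Adj] (v : V) :
    MvPolynomial ↥G.edgeSet ℂ :=
  (∑ e ∈ Finset.univ.filter (fun e : ↥G.edgeSet => v ∈ (e : Sym2 V)), X e) - 1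

/-- A finset of edges of `G` is a matching: its edges are pairwise disjoint. -/
def IsMatchingFinset {V : Type*} (G : SimpleGraph V)
    (M : Finset ↥G.edgeSet) : Prop :=
  ∀ e ∈ M, ∀ e' ∈ M, e ≠ e' →
    ¬ ∃ v : V, v ∈ (e : Sym2 V) ∧ v ∈ (e' : Sym2 V)

/-- The matching number `ν(G)`: the maximum cardinality of a matching. -/
noncomputable def matchNum {V : Type*} [Fintype V] [DecidableEq V]
    (G : SimpleGraph V) [DecidableRel G.Adj] : ℕ :=
  sSup {k : ℕ | ∃ M : Finset ↥G.edgeSet, IsMatchingFinset G M ∧ M.card = k}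

/-- The sum `∑ Θ_{e,e'} · x_e x_{e'}` over pairs of distinct edges sharing a
vertex. -/
noncomputable def pairSum {V : Type*} [Fintype V] [DecidableEq V]
    (G : SimpleGraph V) [DecidableRel G.Adj]
    (Θ : ↥G.edgeSet → ↥G.edgeSet → MvPolynomial ↥G.edgeSet ℂ) :
    MvPolynomial ↥G.edgeSet ℂ :=
  ∑ q ∈ (Finset.univ ×ˢ Finset.univ).filter
      (fun q : ↥G.edgeSet × ↥G.edgeSet => q.1 ≠ q.2 ∧
        ∃ v : V, v ∈ (q.1 : Sym2 V) ∧ v ∈ (q.2 : Sym2 V)),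
    Θ q.1 q.2 * (X q.1 * X q.2)

section SquarefreeExp

variable {σ : Type*}

noncomputable def squarefreeExp (s : Finset σ) : σ →₀ ℕ := ∑ i ∈ s, Finsupp.single i 1

lemma toMultiset_squarefreeExp (s : Finset σ) : Finsupp.toMultiset (squarefreeExp s) = s.val := by
  rw [squarefreeExp, Finsupp.toMultiset_sum_single, one_smul]

lemma squarefreeExp_injective : Function.Injective (squarefreeExp : Finset σ → σ →₀ ℕ) :=
  fun s t h => Finset.val_injective <| by
    rw [← toMultiset_squarefreeExp, h, toMultiset_squarefreeExp]

lemma sum_squarefreeExp (s : Finset σ) : ((squarefreeExp s).sum fun _ k => k) = s.card := by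
  have h := Finsupp.card_toMultiset (squarefreeExp s)
  rw [toMultiset_squarefreeExp] at h
  exact h.symm

lemma squarefreeExp_insert [DecidableEq σ] {s : Finset σ} {i : σ} (hi : i ∉ s) :
    squarefreeExp (insert i s) = squarefreeExp s + Finsupp.single i 1 := by
  rw [squarefreeExp, sum_insert hi, add_comm, squarefreeExp]

lemma squarefreeExp_erase_add [DecidableEq σ] {s : Finset σ} {i : σ} (hi : i ∈ s) :
    squarefreeExp (s.erase i) + Finsupp.single i 1 = squarefreeExp s := by
  rw [← squarefreeExp_insert (notMem_erase i s), insert_erase hi]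

lemma totalDegree_monomial_squarefreeExp_le {R : Type*} [CommSemiring R] (s : Finset σ) (c : R) :
    (monomial (squarefreeExp s) c).totalDegree ≤ s.card :=
  (totalDegree_monomial_le _ _).trans (sum_squarefreeExp s).le

end SquarefreeExp

section Matching

variable {V : Type*} {G : SimpleGraph V} {M M' : Finset ↥G.edgeSet}

lemma isMatchingFinset_empty : IsMatchingFinset G ∅ := by
  simp [IsMatchingFinset]

lemma IsMatchingFinset.subset (hM : IsMatchingFinset G M) (h : M' ⊆ M) :
    IsMatchingFinset G M' :=
  fun e he e' he' hne => hM e (h he) e' (h he') hne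

lemma IsMatchingFinset.eq_of_mem (hM : IsMatchingFinset G M) {e e' : ↥G.edgeSet} {v : V}
    (he : e ∈ M) (he' : e' ∈ M) (hv : v ∈ (e : Sym2 V)) (hv' : v ∈ (e' : Sym2 V)) : e = e' := by
  by_contra hne
  exact hM e he e' he' hne ⟨v, hv, hv'⟩

lemma bddAbove_matchingCards [Fintype V] [DecidableRel G.Adj] :
    BddAbove {k : ℕ | ∃ M : Finset ↥G.edgeSet, IsMatchingFinset G M ∧ M.card = k} :=
  ⟨Fintype.card ↥G.edgeSet, fun _ ⟨M, _, hk⟩ => hk ▸ card_le_univ M⟩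

variable [DecidableEq V]

def coveredVerts (M : Finset ↥G.edgeSet) : Finset V := M.biUnion fun e => (e : Sym2 V).toFinset

lemma mem_coveredVerts {v : V} : v ∈ coveredVerts M ↔ ∃ e ∈ M, v ∈ (e : Sym2 V) := by
  simp [coveredVerts]

lemma IsMatchingFinset.card_coveredVerts (hM : IsMatchingFinset G M) :
    (coveredVerts M).card = 2 * M.card := by
  rw [coveredVerts, card_biUnion, sum_congr rfl fun e _ =>
    Sym2.card_toFinset_of_not_isDiag _ (G.not_isDiag_of_mem_edgeSet e.2), sum_const, smul_eq_mul,
    mul_comm]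
  exact fun e he e' he' hne => disjoint_left.2 fun v hv hv' =>
    hne (hM.eq_of_mem he he' (Sym2.mem_toFinset.1 hv) (Sym2.mem_toFinset.1 hv'))

variable [Fintype V]

lemma IsMatchingFinset.two_mul_card_le (hM : IsMatchingFinset G M) :
    2 * M.card ≤ Fintype.card V :=
  hM.card_coveredVerts ▸ card_le_univ _

lemma IsMatchingFinset.two_mul_card_lt (hM : IsMatchingFinset G M) {v : V}
    (hv : ∀ e ∈ M, v ∉ (e : Sym2 V)) : 2 * M.card < Fintype.card V :=
  hM.card_coveredVerts ▸ card_lt_univ_of_notMem fun h =>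
    let ⟨e, he, hve⟩ := mem_coveredVerts.1 h; hv e he hve

lemma sum_sum_incident_comm {β : Type*} [AddCommMonoid β] (S : Finset ↥G.edgeSet)
    (f : V → ↥G.edgeSet → β) :
    ∑ v, ∑ e ∈ S.filter (fun e : ↥G.edgeSet => v ∈ (e : Sym2 V)), f v e =
      ∑ e ∈ S, ∑ v ∈ (e : Sym2 V).toFinset, f v e := by
  simp_rw [sum_filter]
  rw [sum_comm]
  refine sum_congr rfl fun e _ => ?_
  rw [← sum_filter]
  congr 1
  ext v
  simp

variable [DecidableRel G.Adj]

lemma IsMatchingFinset.card_le_matchNum (hM : IsMatchingFinset G M) : M.card ≤ matchNum G :=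
  le_csSup bddAbove_matchingCards (by exact ⟨M, hM, rfl⟩)

lemma exists_isMatchingFinset_card_eq_matchNum :
    ∃ M : Finset ↥G.edgeSet, IsMatchingFinset G M ∧ M.card = matchNum G :=
  Nat.sSup_mem ⟨0, by exact ⟨∅, isMatchingFinset_empty, rfl⟩⟩ bddAbove_matchingCards

def addableEdges (M : Finset ↥G.edgeSet) : Finset ↥G.edgeSet :=
  univ.filter fun e => ∀ e' ∈ M, ¬ ∃ v : V, v ∈ (e : Sym2 V) ∧ v ∈ (e' : Sym2 V)

lemma notMem_of_mem_addableEdges {e : ↥G.edgeSet} (he : e ∈ addableEdges M) : e ∉ M :=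
  fun heM => (mem_filter.1 he).2 e heM ⟨_, Sym2.out_fst_mem _, Sym2.out_fst_mem _⟩

lemma IsMatchingFinset.insert_of_mem_addableEdges (hM : IsMatchingFinset G M) {e : ↥G.edgeSet}
    (he : e ∈ addableEdges M) : IsMatchingFinset G (insert e M) := by
  have hfree := (mem_filter.1 he).2
  intro f hf f' hf' hne
  rcases mem_insert.1 hf with rfl | hfM <;> rcases mem_insert.1 hf' with rfl | hfM'
  · exact absurd rfl hne
  · exact hfree f' hfM'
  · exact fun ⟨v, hv, hv'⟩ => hfree f hfM ⟨v, hv', hv⟩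
  · exact hM f hfM f' hfM' hne

lemma IsMatchingFinset.mem_addableEdges_erase (hM : IsMatchingFinset G M) {e : ↥G.edgeSet}
    (he : e ∈ M) : e ∈ addableEdges (M.erase e) :=
  mem_filter.2 ⟨mem_univ _, fun _ he' ⟨_, hv, hv'⟩ =>
    ne_of_mem_erase he' (hM.eq_of_mem (mem_of_mem_erase he') he hv' hv)⟩

end Matching

section CertCoeff

variable {K : Type*} [Field K]

noncomputable def certCoeff (n : ℕ) : ℕ → K
  | 0 => -(n : K)⁻¹
  | k + 1 => 2 * (k + 1) / (n - 2 * (k + 1)) * certCoeff n k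

lemma natCast_sub_two_mul_ne_zero [CharZero K] {n k : ℕ} (h : 2 * k < n) :
    (n : K) - 2 * k ≠ 0 :=
  sub_ne_zero.2 (by exact_mod_cast (by omega : n ≠ 2 * k))

lemma certCoeff_ne_zero [CharZero K] {n : ℕ} : ∀ {k : ℕ}, 2 * k < n → certCoeff (K := K) n k ≠ 0
  | 0, h => neg_ne_zero.2 (inv_ne_zero (Nat.cast_ne_zero.2 (by omega)))
  | k + 1, h => by
    have hk := natCast_sub_two_mul_ne_zero (K := K) h
    push_cast at hk
    exact mul_ne_zero (div_ne_zero (mul_ne_zero two_ne_zero k.cast_add_one_ne_zero) hk)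
      (certCoeff_ne_zero (by omega))

lemma two_mul_mul_certCoeff_pred_sub [CharZero K] {n k : ℕ} (h : 2 * k < n) :
    2 * k * certCoeff (K := K) n (k - 1) - (n - 2 * k) * certCoeff n k =
      if k = 0 then 1 else 0 := by
  have hk := natCast_sub_two_mul_ne_zero (K := K) h
  cases k with
  | zero =>
    have hn : (n : K) ≠ 0 := by simpa using hk
    simp [certCoeff, hn]
  | succ k =>
    push_cast at hk ⊢
    simp only [certCoeff]
    field_simp
    ring

end CertCoeff

section EdgeSign

variable {V R : Type*} [DecidableEq V] [Ring R]

noncomputable def edgeSign (e : Sym2 V) (v : V) : R :=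
  if v = e.out.1 then 1 else -1

lemma edgeSign_ne_zero [Nontrivial R] (e : Sym2 V) (v : V) :
    (edgeSign e v : R) ≠ 0 := by
  unfold edgeSign
  split_ifs <;> simp

lemma sum_edgeSign {e : Sym2 V} (he : ¬ e.IsDiag) :
    ∑ v ∈ e.toFinset, (edgeSign e v : R) = 0 := by
  rcases hout : e.out with ⟨a, b⟩
  have he' : e = s(a, b) := by rw [← Quot.out_eq e, hout]
  have hab : a ≠ b := by rwa [he', Sym2.mk_isDiag_iff] at he
  rw [he', Sym2.toFinset_mk_eq, sum_pair hab]
  simp [edgeSign, ← he', hout, hab.symm]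

end EdgeSign

section PairCombinations

variable {V : Type*} [Fintype V] [DecidableEq V] (G : SimpleGraph V) [DecidableRel G.Adj]

def pairCombinations (d : ℕ) : Submodule ℂ (MvPolynomial ↥G.edgeSet ℂ) where
  carrier := {P | ∃ Θ : ↥G.edgeSet → ↥G.edgeSet → MvPolynomial ↥G.edgeSet ℂ,
    (∀ e e', (Θ e e').totalDegree ≤ d) ∧ pairSum G Θ = P}
  zero_mem' := ⟨0, fun _ _ => by simp, by simp [pairSum]⟩
  add_mem' := by
    rintro _ _ ⟨Θ₁, h₁, rfl⟩ ⟨Θ₂, h₂, rfl⟩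
    exact ⟨Θ₁ + Θ₂, fun e e' => (totalDegree_add _ _).trans (max_le (h₁ e e') (h₂ e e')),
      by simp [pairSum, add_mul, sum_add_distrib]⟩
  smul_mem' := by
    rintro c _ ⟨Θ, h, rfl⟩
    exact ⟨c • Θ, fun e e' => (totalDegree_smul_le _ _).trans (h e e'),
      by simp [pairSum, smul_sum]⟩

variable {G}

lemma mul_X_mul_X_mem_pairCombinations {d : ℕ} {p : MvPolynomial ↥G.edgeSet ℂ}
    (hp : p.totalDegree ≤ d) {e e' : ↥G.edgeSet} (hne : e ≠ e')
    (hshare : ∃ v : V, v ∈ (e : Sym2 V) ∧ v ∈ (e' : Sym2 V)) :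
    p * (X e * X e') ∈ pairCombinations G d := by
  refine ⟨fun a b => if (a, b) = (e, e') then p else 0, fun a b => ?_, ?_⟩
  · dsimp only
    split_ifs <;> simp [hp]
  · simp only [pairSum, ite_mul, zero_mul, sum_ite_eq']
    simp [hne, hshare]

end PairCombinations

section Certificate

variable {V : Type*} [Fintype V] [DecidableEq V] {G : SimpleGraph V} [DecidableRel G.Adj]
  {M : Finset ↥G.edgeSet}

instance : DecidablePred (IsMatchingFinset G) := fun M => by
  unfold IsMatchingFinset
  infer_instance

variable (G) in
def matchings : Finset (Finset ↥G.edgeSet) := univ.filter (IsMatchingFinset G)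

lemma mem_matchings : M ∈ matchings G ↔ IsMatchingFinset G M := by
  simp [matchings]

/-- For a matching `M` at most one of the two summands is nonzero; the sum form makes
`∑ v, vertexCoeff M v` easy to evaluate. -/
noncomputable def vertexCoeff (M : Finset ↥G.edgeSet) (v : V) : ℂ :=
  (if ∀ e ∈ M, v ∉ (e : Sym2 V) then certCoeff (Fintype.card V) M.card else 0)
    + ∑ e ∈ M.filter (fun e : ↥G.edgeSet => v ∈ (e : Sym2 V)), edgeSign (e : Sym2 V) v

variable (G) in
noncomputable def certDelta (v : V) : MvPolynomial ↥G.edgeSet ℂ :=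
  ∑ M ∈ matchings G, monomial (squarefreeExp M) (vertexCoeff M v)

lemma vertexCoeff_of_forall_notMem {v : V} (hv : ∀ e ∈ M, v ∉ (e : Sym2 V)) :
    vertexCoeff M v = certCoeff (Fintype.card V) M.card := by
  rw [vertexCoeff, if_pos hv, filter_false_of_mem hv, sum_empty, add_zero]

lemma IsMatchingFinset.vertexCoeff_of_mem (hM : IsMatchingFinset G M) {e : ↥G.edgeSet}
    (he : e ∈ M) {v : V} (hv : v ∈ (e : Sym2 V)) : vertexCoeff M v = edgeSign (e : Sym2 V) v := by
  have hfilter : M.filter (fun e' : ↥G.edgeSet => v ∈ (e' : Sym2 V)) = {e} := by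
    ext e'
    simp only [mem_filter, mem_singleton]
    exact ⟨fun ⟨he', hv'⟩ => hM.eq_of_mem he' he hv' hv, by rintro rfl; exact ⟨he, hv⟩⟩
  rw [vertexCoeff, if_neg fun h => h e he hv, hfilter, sum_singleton, zero_add]

lemma IsMatchingFinset.vertexCoeff_ne_zero (hM : IsMatchingFinset G M)
    (hlt : 2 * M.card < Fintype.card V) (v : V) : vertexCoeff M v ≠ 0 := by
  by_cases hv : ∀ e ∈ M, v ∉ (e : Sym2 V)
  · rw [vertexCoeff_of_forall_notMem hv]
    exact certCoeff_ne_zero hlt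
  · push Not at hv
    obtain ⟨e, he, hve⟩ := hv
    rw [hM.vertexCoeff_of_mem he hve]
    exact edgeSign_ne_zero _ _

lemma IsMatchingFinset.sum_vertexCoeff (hM : IsMatchingFinset G M) :
    ∑ v, vertexCoeff M v =
      (Fintype.card V - 2 * M.card) * certCoeff (Fintype.card V) M.card := by
  have hsigns : ∑ v, ∑ e ∈ M.filter (fun e : ↥G.edgeSet => v ∈ (e : Sym2 V)),
      (edgeSign (e : Sym2 V) v : ℂ) = 0 := by
    rw [sum_sum_incident_comm]
    exact sum_eq_zero fun e _ => sum_edgeSign (G.not_isDiag_of_mem_edgeSet e.2)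
  have huncovered : univ.filter (fun v => ∀ e ∈ M, v ∉ (e : Sym2 V)) = univ \ coveredVerts M := by
    ext v
    simp [mem_coveredVerts]
  simp only [vertexCoeff]
  rw [sum_add_distrib, hsigns, add_zero, ← sum_filter, sum_const, huncovered,
    card_sdiff_of_subset (subset_univ _), card_univ, hM.card_coveredVerts, nsmul_eq_mul,
    Nat.cast_sub hM.two_mul_card_le]
  push_cast
  ring

lemma IsMatchingFinset.sum_vertexCoeff_endpoints_of_mem (hM : IsMatchingFinset G M)
    {e : ↥G.edgeSet} (he : e ∈ M) : ∑ v ∈ (e : Sym2 V).toFinset, vertexCoeff M v = 0 := by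
  rw [sum_congr rfl fun v hv => hM.vertexCoeff_of_mem he (Sym2.mem_toFinset.1 hv)]
  exact sum_edgeSign (G.not_isDiag_of_mem_edgeSet e.2)

lemma sum_vertexCoeff_endpoints_of_mem_addableEdges {e : ↥G.edgeSet} (he : e ∈ addableEdges M) :
    ∑ v ∈ (e : Sym2 V).toFinset, vertexCoeff M v = 2 * certCoeff (Fintype.card V) M.card := by
  rw [sum_congr rfl fun v hv => vertexCoeff_of_forall_notMem fun e' he' hv' =>
      (mem_filter.1 he).2 e' he' ⟨v, Sym2.mem_toFinset.1 hv, hv'⟩,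
    sum_const, Sym2.card_toFinset_of_not_isDiag _ (G.not_isDiag_of_mem_edgeSet e.2),
    nsmul_eq_mul, Nat.cast_ofNat]

lemma IsMatchingFinset.coeff_certDelta (hM : IsMatchingFinset G M) (v : V) :
    (certDelta G v).coeff (squarefreeExp M) = vertexCoeff M v := by
  rw [certDelta, coeff_sum, sum_eq_single M
    (fun M' _ hne => by rw [coeff_monomial, if_neg (squarefreeExp_injective.ne hne)])
    (fun h => absurd (mem_matchings.2 hM) h), coeff_monomial, if_pos rfl]

lemma totalDegree_certDelta (hlt : ∀ M, IsMatchingFinset G M → 2 * M.card < Fintype.card V)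
    (v : V) : (certDelta G v).totalDegree = matchNum G := by
  obtain ⟨M, hM, hcard⟩ := exists_isMatchingFinset_card_eq_matchNum (G := G)
  refine le_antisymm ?_ ?_
  · exact (totalDegree_finsetSum _ _).trans <| Finset.sup_le fun M' hM' =>
      (totalDegree_monomial_squarefreeExp_le _ _).trans (mem_matchings.1 hM').card_le_matchNum
  · rw [← hcard, ← sum_squarefreeExp]
    refine le_totalDegree (mem_support_iff.2 ?_)
    rw [hM.coeff_certDelta]
    exact hM.vertexCoeff_ne_zero (hlt M hM) v

end Certificate

section Identity

variable {V : Type*} [Fintype V] [DecidableEq V] {G : SimpleGraph V} [DecidableRel G.Adj]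
  {M : Finset ↥G.edgeSet}

lemma sum_monomial_mul_pmVertexPoly (s : ↥G.edgeSet →₀ ℕ) (c : V → ℂ) :
    ∑ v, monomial s (c v) * pmVertexPoly G v =
      ∑ e : ↥G.edgeSet, monomial (s + Finsupp.single e 1) (∑ v ∈ (e : Sym2 V).toFinset, c v)
        - monomial s (∑ v, c v) := by
  have hX : ∀ v e, monomial s (c v) * X e = monomial (s + Finsupp.single e 1) (c v) :=
    fun v e => by rw [X, monomial_mul, mul_one]
  simp only [pmVertexPoly, mul_sub, mul_one, mul_sum, hX, sum_sub_distrib, map_sum]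
  rw [sum_sum_incident_comm univ]

lemma IsMatchingFinset.monomial_mem_pairCombinations (hM : IsMatchingFinset G M)
    {e e' : ↥G.edgeSet} (he' : e' ∈ M)
    (hshare : ∃ v : V, v ∈ (e : Sym2 V) ∧ v ∈ (e' : Sym2 V)) :
    monomial (squarefreeExp M + Finsupp.single e 1)
        (∑ v ∈ (e : Sym2 V).toFinset, vertexCoeff M v) ∈ pairCombinations G (matchNum G) := by
  obtain rfl | hne := eq_or_ne e e'
  · rw [hM.sum_vertexCoeff_endpoints_of_mem he', map_zero]
    exact zero_mem _
  · have hsplit : ∀ c : ℂ, monomial (squarefreeExp M + Finsupp.single e 1) c =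
        monomial (squarefreeExp (M.erase e')) c * (X e * X e') := fun c => by
      rw [X, X, monomial_mul, monomial_mul, mul_one, mul_one, ← squarefreeExp_erase_add he',
        add_right_comm, add_assoc]
    rw [hsplit]
    exact mul_X_mul_X_mem_pairCombinations ((totalDegree_monomial_squarefreeExp_le _ _).trans
      ((card_erase_le).trans hM.card_le_matchNum)) hne hshare

lemma IsMatchingFinset.sum_monomial_endpoints_smodEq (hM : IsMatchingFinset G M) :
    ∑ e : ↥G.edgeSet, monomial (squarefreeExp M + Finsupp.single e 1)
        (∑ v ∈ (e : Sym2 V).toFinset, vertexCoeff M v) ≡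
      ∑ e ∈ addableEdges M,
        monomial (squarefreeExp (insert e M)) (2 * certCoeff (Fintype.card V) M.card)
      [SMOD pairCombinations G (matchNum G)] := by
  rw [addableEdges, sum_filter]
  refine SModEq.sum fun e _ => ?_
  split_ifs with hfree
  · have he : e ∈ addableEdges M := mem_filter.2 ⟨mem_univ e, hfree⟩
    rw [sum_vertexCoeff_endpoints_of_mem_addableEdges he,
      squarefreeExp_insert (notMem_of_mem_addableEdges he)]
  · push Not at hfree
    obtain ⟨e', he', hshare⟩ := hfree
    exact SModEq.zero.2 (hM.monomial_mem_pairCombinations he' hshare)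

lemma sum_sum_addableEdges_monomial_insert (f : ℕ → ℂ) :
    ∑ M ∈ matchings G, ∑ e ∈ addableEdges M, monomial (squarefreeExp (insert e M)) (f M.card) =
      ∑ M ∈ matchings G, monomial (squarefreeExp M) (M.card * f (M.card - 1)) := by
  have hcount : ∀ M ∈ matchings G, monomial (squarefreeExp M) (M.card * f (M.card - 1)) =
      ∑ _e ∈ M, monomial (squarefreeExp M) (f (M.card - 1)) := fun M _ => by
    rw [sum_const, ← map_nsmul, nsmul_eq_mul]
  rw [sum_congr rfl hcount, sum_sigma', sum_sigma']
  refine sum_nbij' (fun p => ⟨insert p.2 p.1, p.2⟩) (fun p => ⟨p.1.erase p.2, p.2⟩)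
    ?_ ?_ ?_ ?_ ?_
  · rintro ⟨M, e⟩ hp
    simp only [mem_sigma, mem_matchings] at hp ⊢
    exact ⟨hp.1.insert_of_mem_addableEdges hp.2, mem_insert_self _ _⟩
  · rintro ⟨M, e⟩ hp
    simp only [mem_sigma, mem_matchings] at hp ⊢
    exact ⟨hp.1.subset (erase_subset _ _), hp.1.mem_addableEdges_erase hp.2⟩
  · rintro ⟨M, e⟩ hp
    simp only [mem_sigma] at hp
    simp [erase_insert (notMem_of_mem_addableEdges hp.2)]
  · rintro ⟨M, e⟩ hp
    simp only [mem_sigma] at hp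
    simp [insert_erase hp.2]
  · rintro ⟨M, e⟩ hp
    simp only [mem_sigma] at hp
    simp [card_insert_of_notMem (notMem_of_mem_addableEdges hp.2)]

lemma sum_certDelta_mul_pmVertexPoly_smodEq
    (hlt : ∀ M, IsMatchingFinset G M → 2 * M.card < Fintype.card V) :
    ∑ v, certDelta G v * pmVertexPoly G v ≡ 1 [SMOD pairCombinations G (matchNum G)] := by
  calc ∑ v, certDelta G v * pmVertexPoly G v
      = ∑ M ∈ matchings G, ∑ v,
          monomial (squarefreeExp M) (vertexCoeff M v) * pmVertexPoly G v := by
        simp only [certDelta, sum_mul]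
        exact sum_comm
    _ ≡ ∑ M ∈ matchings G,
          (∑ e ∈ addableEdges M,
              monomial (squarefreeExp (insert e M)) (2 * certCoeff (Fintype.card V) M.card)
            - monomial (squarefreeExp M)
              (((Fintype.card V : ℂ) - 2 * M.card) * certCoeff (Fintype.card V) M.card))
          [SMOD pairCombinations G (matchNum G)] := by
        refine SModEq.sum fun M hM => ?_
        have hM : IsMatchingFinset G M := mem_matchings.1 hM
        rw [sum_monomial_mul_pmVertexPoly, hM.sum_vertexCoeff]
        exact hM.sum_monomial_endpoints_smodEq.sub SModEq.rfl
    _ = ∑ M ∈ matchings G, monomial (squarefreeExp M) (if M = ∅ then (1 : ℂ) else 0) := by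
        rw [sum_sub_distrib,
          sum_sum_addableEdges_monomial_insert fun k => 2 * certCoeff (Fintype.card V) k,
          ← sum_sub_distrib]
        refine sum_congr rfl fun M hM => ?_
        simp only [← map_sub, ← card_eq_zero,
          ← two_mul_mul_certCoeff_pred_sub (hlt M (mem_matchings.1 hM))]
        congr 1
        ring
    _ = 1 := by
        simp [apply_ite, mem_matchings, isMatchingFinset_empty, squarefreeExp]

end Identity

/-- If `G` has no perfect matching, there is a
Nullstellensatz certificate `∑ Δ_v·((∑_{e∋v} x_e) − 1) + ∑ Θ_{e,e'}·x_e x_{e'} = 1`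
such that (a) `deg Δ_v = ν(G)` for every `v`; (b) for every matching `M` the
monomial `∏_{e∈M} x_e` appears with nonzero coefficient in every `Δ_v`;
(c) `deg Θ_{e,e'} ≤ ν(G)`. -/
theorem stmt17 {V : Type*} [Fintype V] [DecidableEq V] (G : SimpleGraph V)
    [DecidableRel G.Adj]
    (hpm : ¬ ∃ M : Finset ↥G.edgeSet, IsMatchingFinset G M ∧
      ∀ v : V, ∃ e ∈ M, v ∈ (e : Sym2 V)) :
    ∃ (Δ : V → MvPolynomial ↥G.edgeSet ℂ)
      (Θ : ↥G.edgeSet → ↥G.edgeSet → MvPolynomial ↥G.edgeSet ℂ),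
      (∑ v : V, Δ v * pmVertexPoly G v) + pairSum G Θ = 1 ∧
      (∀ v : V, (Δ v).totalDegree = matchNum G) ∧
      (∀ M : Finset ↥G.edgeSet, IsMatchingFinset G M →
        ∀ v : V, (Δ v).coeff (∑ e ∈ M, Finsupp.single e 1) ≠ 0) ∧
      (∀ e e' : ↥G.edgeSet, e ≠ e' →
        (∃ v : V, v ∈ (e : Sym2 V) ∧ v ∈ (e' : Sym2 V)) →
        (Θ e e').totalDegree ≤ matchNum G) := by
  have hlt : ∀ M, IsMatchingFinset G M → 2 * M.card < Fintype.card V := fun M hM => by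
    push Not at hpm
    obtain ⟨v, hv⟩ := hpm M hM
    exact hM.two_mul_card_lt hv
  obtain ⟨Θ, hΘdeg, hΘ⟩ :=
    neg_mem (SModEq.sub_mem.1 (sum_certDelta_mul_pmVertexPoly_smodEq (G := G) hlt))
  refine ⟨certDelta G, Θ, ?_, totalDegree_certDelta hlt, fun M hM v => ?_,
    fun e e' _ _ => hΘdeg e e'⟩
  · rw [hΘ]
    ring
  · exact (hM.coeff_certDelta v).trans_ne (hM.vertexCoeff_ne_zero (hlt M hM) v)
end
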